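/- arXiv:2408.02585 — 8 statements merged into one kernel-verified Lean document; each statement's English description precedes it below -/
import Mathlib

section
/- Let c be a commutative and associative product and Γ a torsionless connection on an open set U ⊆ ℝⁿ. Then for all indices k, i, m, j, l, the Hertling–Manin expression written with partial derivatives equals the one written with covariant derivatives: (∂_s c^k_{im}) c^s_{jl} − (∂_s c^k_{jl}) c^s_{im} + (∂_i c^s_{jl}) c^k_{sm} + (∂_m c^s_{jl}) c^k_{si} − (∂_l c^s_{im}) c^k_{js} − (∂_j c^s_{im}) c^k_{ls} = (∇_s c^k_{im}) c^s_{jl} − (∇_s c^k_{jl}) c^s_{im} + (∇_i c^s_{jl}) c^k_{sm} + (∇_m c^s_{jl}) c^k_{si} − (∇_l c^s_{im}) c^k_{js} − (∇_j c^s_{im}) c^k_{ls} on U. -/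
/-- Partial derivative `∂_i f` on `ℝⁿ`. -/
noncomputable def pd {n : ℕ} (i : Fin n) (f : (Fin n → ℝ) → ℝ) : (Fin n → ℝ) → ℝ :=
  fun x => fderiv ℝ f x (Pi.single i 1)

/-- Covariant derivative `∇_l c^i_{jk}` of a (1,2)-tensor `c` with respect to a
connection `Γ`:  `∇_l c^i_{jk} = ∂_l c^i_{jk} + Γ^i_{ls} c^s_{jk} − Γ^s_{lj} c^i_{sk}
− Γ^s_{lk} c^i_{js}`. -/
noncomputable def covC {n : ℕ} (Γ c : Fin n → Fin n → Fin n → (Fin n → ℝ) → ℝ)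
    (l i j k : Fin n) : (Fin n → ℝ) → ℝ :=
  fun x => pd l (c i j k) x + (∑ s, Γ i l s x * c s j k x)
    - (∑ s, Γ s l j x * c i s k x) - (∑ s, Γ s l k x * c i j s x)


lemma key {n : ℕ} (C G : Fin n → Fin n → Fin n → ℝ)
    (P : Fin n → Fin n → Fin n → Fin n → ℝ)
    (hcomm : ∀ i j k, C i j k = C i k j)
    (hassoc : ∀ i j k l, (∑ s, C s i j * C l s k) = ∑ s, C s j k * C l i s)
    (htor : ∀ i j k, G i j k = G i k j)
    (k i m j l : Fin n) :
    (∑ s, P s k i m * C s j l) - (∑ s, P s k j l * C s i m)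
      + (∑ s, P i s j l * C k s m) + (∑ s, P m s j l * C k s i)
      - (∑ s, P l s i m * C k j s) - (∑ s, P j s i m * C k l s)
    =
    (∑ s, (P s k i m + (∑ t, G k s t * C t i m) - (∑ t, G t s i * C k t m)
        - (∑ t, G t s m * C k i t)) * C s j l)
    - (∑ s, (P s k j l + (∑ t, G k s t * C t j l) - (∑ t, G t s j * C k t l)
        - (∑ t, G t s l * C k j t)) * C s i m)
    + (∑ s, (P i s j l + (∑ t, G s i t * C t j l) - (∑ t, G t i j * C s t l)
        - (∑ t, G t i l * C s j t)) * C k s m)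
    + (∑ s, (P m s j l + (∑ t, G s m t * C t j l) - (∑ t, G t m j * C s t l)
        - (∑ t, G t m l * C s j t)) * C k s i)
    - (∑ s, (P l s i m + (∑ t, G s l t * C t i m) - (∑ t, G t l i * C s t m)
        - (∑ t, G t l m * C s i t)) * C k j s)
    - (∑ s, (P j s i m + (∑ t, G s j t * C t i m) - (∑ t, G t j i * C s t m)
        - (∑ t, G t j m * C s i t)) * C k l s) := by
  have h1 : (∑ s, ∑ t, G k s t * C t i m * C s j l)
      = ∑ s, ∑ t, G k s t * C t j l * C s i m := by
    rw [Finset.sum_comm]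
    exact Finset.sum_congr rfl fun s _ => Finset.sum_congr rfl fun t _ => by
      rw [htor k t s]; ring
  have h2 : (∑ s, ∑ t, G t s i * C k t m * C s j l)
      = ∑ s, ∑ t, G s i t * C t j l * C k s m := by
    rw [Finset.sum_comm]
    exact Finset.sum_congr rfl fun s _ => Finset.sum_congr rfl fun t _ => by
      rw [htor s t i]; ring
  have h3 : (∑ s, ∑ t, G t s m * C k i t * C s j l)
      = ∑ s, ∑ t, G s m t * C t j l * C k s i := by
    rw [Finset.sum_comm]
    exact Finset.sum_congr rfl fun s _ => Finset.sum_congr rfl fun t _ => by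
      rw [htor s t m, hcomm k i s]; ring
  have h4 : (∑ s, ∑ t, G t s j * C k t l * C s i m)
      = ∑ s, ∑ t, G s j t * C t i m * C k l s := by
    rw [Finset.sum_comm]
    exact Finset.sum_congr rfl fun s _ => Finset.sum_congr rfl fun t _ => by
      rw [htor s t j, hcomm k s l]; ring
  have h5 : (∑ s, ∑ t, G t s l * C k j t * C s i m)
      = ∑ s, ∑ t, G s l t * C t i m * C k j s := by
    rw [Finset.sum_comm]
    exact Finset.sum_congr rfl fun s _ => Finset.sum_congr rfl fun t _ => by
      rw [htor s t l]; ring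
  have h6 : (∑ s, ∑ t, G t i j * C s t l * C k s m)
      = ∑ s, ∑ t, G t j i * C s t m * C k l s := by
    rw [Finset.sum_comm]; conv_rhs => rw [Finset.sum_comm]
    refine Finset.sum_congr rfl fun t _ => ?_
    simp only [mul_assoc, ← Finset.mul_sum]
    have e2 : (∑ s, C s t m * C k l s) = ∑ s, C s l m * C k t s := by
      calc (∑ s, C s t m * C k l s) = ∑ s, C s t m * C k s l :=
            Finset.sum_congr rfl fun s _ => by rw [hcomm k l s]
        _ = ∑ s, C s m l * C k t s := hassoc t m l k
        _ = ∑ s, C s l m * C k t s :=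
            Finset.sum_congr rfl fun s _ => by rw [hcomm s m l]
    rw [hassoc t l m k, e2, htor t i j]
  have h7 : (∑ s, ∑ t, G t i l * C s j t * C k s m)
      = ∑ s, ∑ t, G t l i * C s t m * C k j s := by
    rw [Finset.sum_comm]; conv_rhs => rw [Finset.sum_comm]
    refine Finset.sum_congr rfl fun t _ => ?_
    simp only [mul_assoc, ← Finset.mul_sum]
    rw [hassoc j t m k, htor t i l]
  have h8 : (∑ s, ∑ t, G t m j * C s t l * C k s i)
      = ∑ s, ∑ t, G t j m * C s i t * C k l s := by
    rw [Finset.sum_comm]; conv_rhs => rw [Finset.sum_comm]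
    refine Finset.sum_congr rfl fun t _ => ?_
    simp only [mul_assoc, ← Finset.mul_sum]
    have e2 : (∑ s, C s i t * C k l s) = ∑ s, C s l i * C k t s := by
      calc (∑ s, C s i t * C k l s) = ∑ s, C s t i * C k s l :=
            Finset.sum_congr rfl fun s _ => by rw [hcomm k l s, hcomm s i t]
        _ = ∑ s, C s i l * C k t s := hassoc t i l k
        _ = ∑ s, C s l i * C k t s :=
            Finset.sum_congr rfl fun s _ => by rw [hcomm s i l]
    rw [hassoc t l i k, e2, htor t m j]
  have h9 : (∑ s, ∑ t, G t m l * C s j t * C k s i)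
      = ∑ s, ∑ t, G t l m * C s i t * C k j s := by
    rw [Finset.sum_comm]; conv_rhs => rw [Finset.sum_comm]
    refine Finset.sum_congr rfl fun t _ => ?_
    simp only [mul_assoc, ← Finset.mul_sum]
    have e2 : (∑ s, C s i t * C k j s) = ∑ s, C s t i * C k j s :=
      Finset.sum_congr rfl fun s _ => by rw [hcomm s i t]
    rw [hassoc j t i k, e2, htor t m l]
  simp only [sub_mul, add_mul, Finset.sum_mul, Finset.sum_sub_distrib,
    Finset.sum_add_distrib]
  linear_combination -h1 + h2 + h3 - h4 - h5 + h6 + h7 + h8 + h9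

/-- For a commutative associative product `c` and a torsionless connection `Γ` on an
open set `U ⊆ ℝⁿ`, the Hertling–Manin expression written with partial derivatives
equals the one written with covariant derivatives. -/
theorem stmt0 {n : ℕ} (U : Set (Fin n → ℝ)) (hU : IsOpen U)
    (c Γ : Fin n → Fin n → Fin n → (Fin n → ℝ) → ℝ)
    (hc : ∀ i j k, ContDiffOn ℝ (⊤ : ℕ∞) (c i j k) U)
    (hΓ : ∀ i j k, ContDiffOn ℝ (⊤ : ℕ∞) (Γ i j k) U)
    (hcomm : ∀ i j k, ∀ x ∈ U, c i j k x = c i k j x)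
    (hassoc : ∀ i j k l, ∀ x ∈ U,
      (∑ s, c s i j x * c l s k x) = ∑ s, c s j k x * c l i s x)
    (htor : ∀ i j k, ∀ x ∈ U, Γ i j k x = Γ i k j x) :
    ∀ k i m j l, ∀ x ∈ U,
      (∑ s, pd s (c k i m) x * c s j l x) - (∑ s, pd s (c k j l) x * c s i m x)
        + (∑ s, pd i (c s j l) x * c k s m x) + (∑ s, pd m (c s j l) x * c k s i x)
        - (∑ s, pd l (c s i m) x * c k j s x) - (∑ s, pd j (c s i m) x * c k l s x)
      =
      (∑ s, covC Γ c s k i m x * c s j l x) - (∑ s, covC Γ c s k j l x * c s i m x)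
        + (∑ s, covC Γ c i s j l x * c k s m x) + (∑ s, covC Γ c m s j l x * c k s i x)
        - (∑ s, covC Γ c l s i m x * c k j s x) - (∑ s, covC Γ c j s i m x * c k l s x) := by
  intro k i m j l x hx
  simp only [covC]
  exact key (fun a b d => c a b d x) (fun a b d => Γ a b d x)
    (fun a b d e => pd a (c b d e) x)
    (fun a b d => hcomm a b d x hx) (fun a b d e => hassoc a b d e x hx)
    (fun a b d => htor a b d x hx) k i m j l
end

section
/- Let c be a commutative and associative product with unit vector field e on an open set U ⊆ ℝⁿ, satisfying the Hertling–Manin condition in coordinates, and let Γ be a torsionless connection on U with ∇e = 0. Then e^l ∇_l c^i_{jk} = 0 on U for all indices i, j, k. -/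
open Finset in
lemma keyAlg {n : ℕ} (C : Fin n → Fin n → Fin n → ℝ)
    (D : Fin n → Fin n → Fin n → Fin n → ℝ)
    (E : Fin n → ℝ) (F : Fin n → Fin n → ℝ)
    (comm : ∀ i j k, C i j k = C i k j)
    (dcomm : ∀ l i j k, D l i j k = D l i k j)
    (assoc : ∀ i j k l, (∑ s, C s i j * C l s k) = ∑ s, C s j k * C l i s)
    (unit : ∀ i s, (∑ k, E k * C i k s) = if i = s then 1 else 0)
    (dunit : ∀ p i s, (∑ k, (E k * D p i k s + C i k s * F p k)) = 0)
    (HM : ∀ k i m j l,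
      (∑ s, D s k i m * C s j l) - (∑ s, D s k j l * C s i m)
        + (∑ s, D i s j l * C k s m) + (∑ s, D m s j l * C k s i)
        - (∑ s, D l s i m * C k j s) - (∑ s, D j s i m * C k l s) = 0) :
    ∀ k i m, (∑ l, E l * D l k i m) - (∑ l, F l k * C l i m)
      + (∑ l, F i l * C k l m) + (∑ l, F m l * C k l i) = 0 := by
  have hδ : ∀ s j, (∑ l, E l * C s j l) = if s = j then 1 else 0 := by
    intro s j
    calc (∑ l, E l * C s j l) = ∑ l, E l * C s l j :=
          Finset.sum_congr rfl fun l _ => by rw [comm s j l]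
      _ = _ := unit s j
  have hdc : ∀ p i j, (∑ l, E l * D p i l j) = -∑ l, F p l * C i l j := by
    intro p i j
    have h := dunit p i j
    rw [Finset.sum_add_distrib] at h
    have h2 : (∑ k, C i k j * F p k) = ∑ l, F p l * C i l j :=
      Finset.sum_congr rfl fun _ _ => mul_comm _ _
    linarith
  have hpull : ∀ (X : Fin n → ℝ) (Y : Fin n → Fin n → ℝ),
      (∑ l, E l * ∑ s, X s * Y s l) = ∑ s, X s * ∑ l, E l * Y s l := by
    intro X Y
    calc (∑ l, E l * ∑ s, X s * Y s l) = ∑ l, ∑ s, E l * (X s * Y s l) :=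
          Finset.sum_congr rfl fun l _ => Finset.mul_sum _ _ _
      _ = ∑ s, ∑ l, E l * (X s * Y s l) := Finset.sum_comm
      _ = ∑ s, X s * ∑ l, E l * Y s l := by
          refine Finset.sum_congr rfl fun s _ => ?_
          rw [Finset.mul_sum]
          exact Finset.sum_congr rfl fun l _ => by ring
  have hinner : ∀ k j l m, (∑ s, C k j s * C s l m) = ∑ s, C s l j * C k s m := by
    intro k j l m
    calc (∑ s, C k j s * C s l m) = ∑ s, C s l m * C k s j :=
          Finset.sum_congr rfl fun s _ => by rw [comm k j s]; ring
      _ = ∑ s, C s m j * C k l s := assoc l m j k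
      _ = ∑ s, C s j m * C k l s :=
          Finset.sum_congr rfl fun s _ => by rw [comm s m j]
      _ = ∑ s, C s l j * C k s m := (assoc l j m k).symm
  have hstep : ∀ k j i m, (∑ s, C k j s *
      ((∑ l, E l * D l s i m) - (∑ l, F l s * C l i m)
        + (∑ l, F i l * C s l m) + (∑ l, F m l * C s l i))) = 0 := by
    intro k j i m
    have hS : (∑ l, E l * ((∑ s, D s k i m * C s j l) - (∑ s, D s k j l * C s i m)
        + (∑ s, D i s j l * C k s m) + (∑ s, D m s j l * C k s i)
        - (∑ s, D l s i m * C k j s) - (∑ s, D j s i m * C k l s))) = 0 :=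
      Finset.sum_eq_zero fun l _ => by rw [HM k i m j l, mul_zero]
    simp only [mul_sub, mul_add, Finset.sum_sub_distrib, Finset.sum_add_distrib] at hS
    have hT1 : (∑ l, E l * ∑ s, D s k i m * C s j l) = D j k i m := by
      rw [hpull]
      simp [hδ, mul_ite, Finset.sum_ite_eq']
    have hT2 : (∑ l, E l * ∑ s, D s k j l * C s i m)
        = -∑ s, (∑ l, F s l * C k l j) * C s i m := by
      have h1 : (∑ l, E l * ∑ s, D s k j l * C s i m)
          = ∑ l, E l * ∑ s, C s i m * D s k j l :=
        Finset.sum_congr rfl fun l _ =>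
          congrArg (E l * ·) (Finset.sum_congr rfl fun s _ => mul_comm _ _)
      rw [h1, hpull]
      have h2 : ∀ s, (∑ l, E l * D s k j l) = -∑ l, F s l * C k l j := by
        intro s
        calc (∑ l, E l * D s k j l) = ∑ l, E l * D s k l j :=
              Finset.sum_congr rfl fun l _ => by rw [dcomm s k j l]
          _ = _ := hdc s k j
      calc (∑ s, C s i m * ∑ l, E l * D s k j l)
          = ∑ s, C s i m * -(∑ l, F s l * C k l j) :=
            Finset.sum_congr rfl fun s _ => by rw [h2 s]
        _ = -∑ s, (∑ l, F s l * C k l j) * C s i m := by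
            rw [← Finset.sum_neg_distrib]
            exact Finset.sum_congr rfl fun s _ => by ring
    have hT3 : (∑ l, E l * ∑ s, D i s j l * C k s m)
        = -∑ s, (∑ l, F i l * C s l j) * C k s m := by
      have h1 : (∑ l, E l * ∑ s, D i s j l * C k s m)
          = ∑ l, E l * ∑ s, C k s m * D i s j l :=
        Finset.sum_congr rfl fun l _ =>
          congrArg (E l * ·) (Finset.sum_congr rfl fun s _ => mul_comm _ _)
      rw [h1, hpull]
      have h2 : ∀ s, (∑ l, E l * D i s j l) = -∑ l, F i l * C s l j := by
        intro s
        calc (∑ l, E l * D i s j l) = ∑ l, E l * D i s l j :=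
              Finset.sum_congr rfl fun l _ => by rw [dcomm i s j l]
          _ = _ := hdc i s j
      calc (∑ s, C k s m * ∑ l, E l * D i s j l)
          = ∑ s, C k s m * -(∑ l, F i l * C s l j) :=
            Finset.sum_congr rfl fun s _ => by rw [h2 s]
        _ = -∑ s, (∑ l, F i l * C s l j) * C k s m := by
            rw [← Finset.sum_neg_distrib]
            exact Finset.sum_congr rfl fun s _ => by ring
    have hT4 : (∑ l, E l * ∑ s, D m s j l * C k s i)
        = -∑ s, (∑ l, F m l * C s l j) * C k s i := by
      have h1 : (∑ l, E l * ∑ s, D m s j l * C k s i)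
          = ∑ l, E l * ∑ s, C k s i * D m s j l :=
        Finset.sum_congr rfl fun l _ =>
          congrArg (E l * ·) (Finset.sum_congr rfl fun s _ => mul_comm _ _)
      rw [h1, hpull]
      have h2 : ∀ s, (∑ l, E l * D m s j l) = -∑ l, F m l * C s l j := by
        intro s
        calc (∑ l, E l * D m s j l) = ∑ l, E l * D m s l j :=
              Finset.sum_congr rfl fun l _ => by rw [dcomm m s j l]
          _ = _ := hdc m s j
      calc (∑ s, C k s i * ∑ l, E l * D m s j l)
          = ∑ s, C k s i * -(∑ l, F m l * C s l j) :=
            Finset.sum_congr rfl fun s _ => by rw [h2 s]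
        _ = -∑ s, (∑ l, F m l * C s l j) * C k s i := by
            rw [← Finset.sum_neg_distrib]
            exact Finset.sum_congr rfl fun s _ => by ring
    have hT5 : (∑ l, E l * ∑ s, D l s i m * C k j s)
        = ∑ s, C k j s * ∑ l, E l * D l s i m := by
      have h1 : (∑ l, E l * ∑ s, D l s i m * C k j s)
          = ∑ l, E l * ∑ s, C k j s * D l s i m :=
        Finset.sum_congr rfl fun l _ =>
          congrArg (E l * ·) (Finset.sum_congr rfl fun s _ => mul_comm _ _)
      rw [h1, hpull]
    have hT6 : (∑ l, E l * ∑ s, D j s i m * C k l s) = D j k i m := by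
      have h1 : (∑ l, E l * ∑ s, D j s i m * C k l s)
          = ∑ s, D j s i m * ∑ l, E l * C k l s :=
        hpull (fun s => D j s i m) (fun s l => C k l s)
      rw [h1]
      simp [unit, mul_ite, Finset.sum_ite_eq]
    rw [hT1, hT2, hT3, hT4, hT5, hT6] at hS
    simp only [mul_sub, mul_add, Finset.sum_sub_distrib, Finset.sum_add_distrib]
    have hG2 : (∑ s, C k j s * ∑ l, F l s * C l i m)
        = ∑ s, (∑ l, F s l * C k l j) * C s i m := by
      calc (∑ s, C k j s * ∑ l, F l s * C l i m)
          = ∑ s, ∑ l, C k j s * (F l s * C l i m) :=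
            Finset.sum_congr rfl fun s _ => Finset.mul_sum _ _ _
        _ = ∑ l, ∑ s, C k j s * (F l s * C l i m) := Finset.sum_comm
        _ = ∑ l, ∑ s, (F l s * C k s j) * C l i m := by
            refine Finset.sum_congr rfl fun l _ => Finset.sum_congr rfl fun s _ => ?_
            rw [comm k j s]; ring
        _ = ∑ s, (∑ l, F s l * C k l j) * C s i m :=
            Finset.sum_congr rfl fun l _ => (Finset.sum_mul _ _ _).symm
    have hG3 : (∑ s, C k j s * ∑ l, F i l * C s l m)
        = ∑ s, (∑ l, F i l * C s l j) * C k s m := by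
      calc (∑ s, C k j s * ∑ l, F i l * C s l m)
          = ∑ s, ∑ l, C k j s * (F i l * C s l m) :=
            Finset.sum_congr rfl fun s _ => Finset.mul_sum _ _ _
        _ = ∑ l, ∑ s, C k j s * (F i l * C s l m) := Finset.sum_comm
        _ = ∑ l, F i l * ∑ s, C k j s * C s l m := by
            refine Finset.sum_congr rfl fun l _ => ?_
            rw [Finset.mul_sum]
            exact Finset.sum_congr rfl fun s _ => by ring
        _ = ∑ l, F i l * ∑ s, C s l j * C k s m :=
            Finset.sum_congr rfl fun l _ => by rw [hinner k j l m]
        _ = ∑ l, ∑ s, (F i l * C s l j) * C k s m := by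
            refine Finset.sum_congr rfl fun l _ => ?_
            rw [Finset.mul_sum]
            exact Finset.sum_congr rfl fun s _ => by ring
        _ = ∑ s, ∑ l, (F i l * C s l j) * C k s m := Finset.sum_comm
        _ = ∑ s, (∑ l, F i l * C s l j) * C k s m :=
            Finset.sum_congr rfl fun s _ => (Finset.sum_mul _ _ _).symm
    have hG4 : (∑ s, C k j s * ∑ l, F m l * C s l i)
        = ∑ s, (∑ l, F m l * C s l j) * C k s i := by
      calc (∑ s, C k j s * ∑ l, F m l * C s l i)
          = ∑ s, ∑ l, C k j s * (F m l * C s l i) :=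
            Finset.sum_congr rfl fun s _ => Finset.mul_sum _ _ _
        _ = ∑ l, ∑ s, C k j s * (F m l * C s l i) := Finset.sum_comm
        _ = ∑ l, F m l * ∑ s, C k j s * C s l i := by
            refine Finset.sum_congr rfl fun l _ => ?_
            rw [Finset.mul_sum]
            exact Finset.sum_congr rfl fun s _ => by ring
        _ = ∑ l, F m l * ∑ s, C s l j * C k s i :=
            Finset.sum_congr rfl fun l _ => by rw [hinner k j l i]
        _ = ∑ l, ∑ s, (F m l * C s l j) * C k s i := by
            refine Finset.sum_congr rfl fun l _ => ?_
            rw [Finset.mul_sum]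
            exact Finset.sum_congr rfl fun s _ => by ring
        _ = ∑ s, ∑ l, (F m l * C s l j) * C k s i := Finset.sum_comm
        _ = ∑ s, (∑ l, F m l * C s l j) * C k s i :=
            Finset.sum_congr rfl fun s _ => (Finset.sum_mul _ _ _).symm
    rw [hG2, hG3, hG4]
    linarith
  intro k i m
  have h0 : (∑ j, E j * ∑ s, C k j s *
      ((∑ l, E l * D l s i m) - (∑ l, F l s * C l i m)
        + (∑ l, F i l * C s l m) + (∑ l, F m l * C s l i))) = 0 :=
    Finset.sum_eq_zero fun j _ => by rw [hstep k j i m, mul_zero]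
  have h1 : (∑ j, E j * ∑ s, C k j s *
      ((∑ l, E l * D l s i m) - (∑ l, F l s * C l i m)
        + (∑ l, F i l * C s l m) + (∑ l, F m l * C s l i)))
      = ∑ s, ((∑ l, E l * D l s i m) - (∑ l, F l s * C l i m)
        + (∑ l, F i l * C s l m) + (∑ l, F m l * C s l i)) * ∑ j, E j * C k j s := by
    have h2 : (∑ j, E j * ∑ s, C k j s *
        ((∑ l, E l * D l s i m) - (∑ l, F l s * C l i m)
          + (∑ l, F i l * C s l m) + (∑ l, F m l * C s l i)))
        = ∑ j, E j * ∑ s,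
          ((∑ l, E l * D l s i m) - (∑ l, F l s * C l i m)
          + (∑ l, F i l * C s l m) + (∑ l, F m l * C s l i)) * C k j s :=
      Finset.sum_congr rfl fun j _ =>
        congrArg (E j * ·) (Finset.sum_congr rfl fun s _ => mul_comm _ _)
    rw [h2, hpull]
  rw [h1] at h0
  simp only [unit, mul_ite, mul_one, mul_zero, Finset.sum_ite_eq] at h0
  simpa using h0

/-- If `c` is a commutative associative product with unit `e` satisfying the
Hertling–Manin condition in coordinates, and `Γ` is a torsionless connection with
`∇e = 0`, then `e^l ∇_l c^i_{jk} = 0` on `U`. -/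
theorem stmt1 {n : ℕ} (U : Set (Fin n → ℝ)) (hU : IsOpen U)
    (c Γ : Fin n → Fin n → Fin n → (Fin n → ℝ) → ℝ)
    (e : Fin n → (Fin n → ℝ) → ℝ)
    (hc : ∀ i j k, ContDiffOn ℝ (⊤ : ℕ∞) (c i j k) U)
    (hΓ : ∀ i j k, ContDiffOn ℝ (⊤ : ℕ∞) (Γ i j k) U)
    (he : ∀ i, ContDiffOn ℝ (⊤ : ℕ∞) (e i) U)
    (hcomm : ∀ i j k, ∀ x ∈ U, c i j k x = c i k j x)
    (hassoc : ∀ i j k l, ∀ x ∈ U,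
      (∑ s, c s i j x * c l s k x) = ∑ s, c s j k x * c l i s x)
    (hunit : ∀ i s, ∀ x ∈ U, (∑ k, e k x * c i k s x) = if i = s then 1 else 0)
    (hHM : ∀ k i m j l, ∀ x ∈ U,
      (∑ s, pd s (c k i m) x * c s j l x) - (∑ s, pd s (c k j l) x * c s i m x)
        + (∑ s, pd i (c s j l) x * c k s m x) + (∑ s, pd m (c s j l) x * c k s i x)
        - (∑ s, pd l (c s i m) x * c k j s x) - (∑ s, pd j (c s i m) x * c k l s x) = 0)
    (htor : ∀ i j k, ∀ x ∈ U, Γ i j k x = Γ i k j x)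
    (hflate : ∀ i j, ∀ x ∈ U, pd j (e i) x + (∑ s, Γ i j s x * e s x) = 0) :
    ∀ i j k, ∀ x ∈ U, (∑ l, e l x * covC Γ c l i j k x) = 0 := by
  intro i j k x hx
  have hdiffc : ∀ a b d, DifferentiableAt ℝ (c a b d) x := fun a b d =>
    ((hc a b d).contDiffAt (hU.mem_nhds hx)).differentiableAt (by norm_num)
  have hdiffe : ∀ a, DifferentiableAt ℝ (e a) x := fun a =>
    ((he a).contDiffAt (hU.mem_nhds hx)).differentiableAt (by norm_num)
  have hdcomm : ∀ l a b d, pd l (c a b d) x = pd l (c a d b) x := by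
    intro l a b d
    have hev : c a b d =ᶠ[nhds x] c a d b :=
      Filter.eventuallyEq_of_mem (hU.mem_nhds hx) (fun y hy => hcomm a b d y hy)
    unfold pd
    rw [hev.fderiv_eq]
  have hdunit : ∀ p a s,
      (∑ q, (e q x * pd p (c a q s) x + c a q s x * pd p (e q) x)) = 0 := by
    intro p a s
    have hg : HasFDerivAt (fun y => ∑ q, e q y * c a q s y)
        (∑ q, (e q x • fderiv ℝ (c a q s) x + c a q s x • fderiv ℝ (e q) x)) x :=
      HasFDerivAt.fun_sum fun q _ =>
        ((hdiffe q).hasFDerivAt.mul (hdiffc a q s).hasFDerivAt)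
    have hev : (fun y => ∑ q, e q y * c a q s y) =ᶠ[nhds x]
        (fun _ => if a = s then (1:ℝ) else 0) :=
      Filter.eventuallyEq_of_mem (hU.mem_nhds hx) (fun y hy => hunit a s y hy)
    have h0 : (∑ q, (e q x • fderiv ℝ (c a q s) x + c a q s x • fderiv ℝ (e q) x)) = 0 := by
      rw [← hg.fderiv, hev.fderiv_eq, fderiv_fun_const]
      rfl
    have h1 := congrArg (fun L : (Fin n → ℝ) →L[ℝ] ℝ => L (Pi.single p 1)) h0
    simpa [pd, ContinuousLinearMap.sum_apply, smul_eq_mul] using h1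
  have hA := keyAlg (fun a b d => c a b d x) (fun l a b d => pd l (c a b d) x)
    (fun l => e l x) (fun p l => pd p (e l) x)
    (fun a b d => hcomm a b d x hx)
    (fun l a b d => hdcomm l a b d)
    (fun a b d q => hassoc a b d q x hx)
    (fun a s => hunit a s x hx)
    (fun p a s => hdunit p a s)
    (fun a b d q l => hHM a b d q l x hx)
    i j k
  have hcontr : ∀ a b, (∑ l, e l x * Γ a l b x) = -(pd b (e a) x) := by
    intro a b
    have h := hflate a b x hx
    have h2 : (∑ l, e l x * Γ a l b x) = ∑ s, Γ a b s x * e s x :=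
      Finset.sum_congr rfl fun l _ => by rw [htor a l b x hx]; ring
    linarith
  have t1 : (∑ l, ∑ s, e l x * (Γ i l s x * c s j k x))
      = -∑ l, pd l (e i) x * c l j k x := by
    rw [Finset.sum_comm]
    calc (∑ s, ∑ l, e l x * (Γ i l s x * c s j k x))
        = ∑ s, (∑ l, e l x * Γ i l s x) * c s j k x := by
          refine Finset.sum_congr rfl fun s _ => ?_
          rw [Finset.sum_mul]
          exact Finset.sum_congr rfl fun l _ => by ring
      _ = ∑ s, -(pd s (e i) x) * c s j k x :=
          Finset.sum_congr rfl fun s _ => by rw [hcontr i s]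
      _ = -∑ s, pd s (e i) x * c s j k x := by
          rw [← Finset.sum_neg_distrib]
          exact Finset.sum_congr rfl fun s _ => by ring
  have t2 : (∑ l, ∑ s, e l x * (Γ s l j x * c i s k x))
      = -∑ l, pd j (e l) x * c i l k x := by
    rw [Finset.sum_comm]
    calc (∑ s, ∑ l, e l x * (Γ s l j x * c i s k x))
        = ∑ s, (∑ l, e l x * Γ s l j x) * c i s k x := by
          refine Finset.sum_congr rfl fun s _ => ?_
          rw [Finset.sum_mul]
          exact Finset.sum_congr rfl fun l _ => by ring
      _ = ∑ s, -(pd j (e s) x) * c i s k x :=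
          Finset.sum_congr rfl fun s _ => by rw [hcontr s j]
      _ = -∑ s, pd j (e s) x * c i s k x := by
          rw [← Finset.sum_neg_distrib]
          exact Finset.sum_congr rfl fun s _ => by ring
  have t3 : (∑ l, ∑ s, e l x * (Γ s l k x * c i j s x))
      = -∑ l, pd k (e l) x * c i l j x := by
    rw [Finset.sum_comm]
    calc (∑ s, ∑ l, e l x * (Γ s l k x * c i j s x))
        = ∑ s, (∑ l, e l x * Γ s l k x) * c i j s x := by
          refine Finset.sum_congr rfl fun s _ => ?_
          rw [Finset.sum_mul]
          exact Finset.sum_congr rfl fun l _ => by ring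
      _ = ∑ s, -(pd k (e s) x) * c i j s x :=
          Finset.sum_congr rfl fun s _ => by rw [hcontr s k]
      _ = ∑ s, -(pd k (e s) x) * c i s j x :=
          Finset.sum_congr rfl fun s _ => by rw [hcomm i s j x hx]
      _ = -∑ s, pd k (e s) x * c i s j x := by
          rw [← Finset.sum_neg_distrib]
          exact Finset.sum_congr rfl fun s _ => by ring
  simp only [covC, mul_add, mul_sub, Finset.mul_sum, Finset.sum_add_distrib,
    Finset.sum_sub_distrib]
  linarith [hA, t1, t2, t3]
end

section
/- Let c be a commutative and associative product with unit vector field e on an open set U ⊆ ℝⁿ, satisfying the Hertling–Manin condition in coordinates, and let Γ be a torsionless connection on U with ∇e = 0. Suppose X_{(0)},…,X_{(n−1)} are smooth vector fields on U that are linearly independent at every point of U and satisfy d_∇(X_{(i)}∘) = 0 for every i. Then the covariant derivative of the product is symmetric: ∇_j c^i_{ks} = ∇_k c^i_{js} on U for all indices i, j, k, s. -/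
/-- Covariant derivative `∇_j V^i_k` of a (1,1)-tensor `V` with respect to a
connection `Γ`. -/
noncomputable def covT {n : ℕ} (Γ : Fin n → Fin n → Fin n → (Fin n → ℝ) → ℝ)
    (V : Fin n → Fin n → (Fin n → ℝ) → ℝ) (j i k : Fin n) : (Fin n → ℝ) → ℝ :=
  fun x => pd j (V i k) x + (∑ s, Γ i j s x * V s k x) - (∑ s, Γ s j k x * V i s x)

/-- The (1,1)-tensor `X∘`, with components `(X∘)^i_j = c^i_{js} X^s`. -/
noncomputable def Xcirc {n : ℕ} (c : Fin n → Fin n → Fin n → (Fin n → ℝ) → ℝ)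
    (X : Fin n → (Fin n → ℝ) → ℝ) (i j : Fin n) : (Fin n → ℝ) → ℝ :=
  fun x => ∑ s, c i j s x * X s x

section helpers
variable {n : ℕ} {x : Fin n → ℝ} {U : Set (Fin n → ℝ)}

private lemma pd_congr (hU : IsOpen U) (hx : x ∈ U) {f g : (Fin n → ℝ) → ℝ}
    (h : ∀ y ∈ U, f y = g y) (j : Fin n) : pd j f x = pd j g x := by
  have hev : f =ᶠ[nhds x] g := Filter.eventuallyEq_of_mem (hU.mem_nhds hx) h
  simp [pd, hev.fderiv_eq]

private lemma pd_const (j : Fin n) (a : ℝ) : pd j (fun _ => a) x = 0 := by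
  simp [pd]

private lemma pd_sum {ι : Type*} [Fintype ι] (F : ι → (Fin n → ℝ) → ℝ)
    (h : ∀ a, DifferentiableAt ℝ (F a) x) (j : Fin n) :
    pd j (fun y => ∑ a, F a y) x = ∑ a, pd j (F a) x := by
  simp [pd, fderiv_fun_sum (fun a _ => h a)]

private lemma pd_mul {f g : (Fin n → ℝ) → ℝ} (hf : DifferentiableAt ℝ f x)
    (hg : DifferentiableAt ℝ g x) (j : Fin n) :
    pd j (fun y => f y * g y) x = pd j f x * g x + f x * pd j g x := by
  simp only [pd, fderiv_fun_mul hf hg, ContinuousLinearMap.add_apply,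
    ContinuousLinearMap.smul_apply, smul_eq_mul]
  ring

private lemma diffAt (hU : IsOpen U) (hx : x ∈ U) {f : (Fin n → ℝ) → ℝ}
    (h : ContDiffOn ℝ (⊤ : ℕ∞) f U) : DifferentiableAt ℝ f x :=
  (h.differentiableOn (by simp)).differentiableAt (hU.mem_nhds hx)

private lemma swap3 (f : Fin n → Fin n → Fin n → ℝ) (u v : Fin n → ℝ) :
    (∑ i, ∑ m, u i * v m * ∑ s, f s i m) = ∑ s, ∑ i, ∑ m, f s i m * u i * v m := by
  calc (∑ i, ∑ m, u i * v m * ∑ s, f s i m)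
      = ∑ i, ∑ m, ∑ s, f s i m * u i * v m := by
        refine Finset.sum_congr rfl fun i _ => Finset.sum_congr rfl fun m _ => ?_
        rw [Finset.mul_sum]
        exact Finset.sum_congr rfl fun s _ => by ring
    _ = ∑ i, ∑ s, ∑ m, f s i m * u i * v m :=
        Finset.sum_congr rfl fun i _ => Finset.sum_comm
    _ = ∑ s, ∑ i, ∑ m, f s i m * u i * v m := Finset.sum_comm

end helpers
/-- Given `n` pointwise linearly independent vector fields `X_(0), …, X_(n−1)` with
`d_∇(X_(i)∘) = 0`, the covariant derivative of the product is symmetric: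
`∇_j c^i_{ks} = ∇_k c^i_{js}` on `U`. -/
theorem stmt4 {n : ℕ} (U : Set (Fin n → ℝ)) (hU : IsOpen U)
    (c Γ : Fin n → Fin n → Fin n → (Fin n → ℝ) → ℝ)
    (e : Fin n → (Fin n → ℝ) → ℝ)
    (X : Fin n → Fin n → (Fin n → ℝ) → ℝ)
    (hc : ∀ i j k, ContDiffOn ℝ (⊤ : ℕ∞) (c i j k) U)
    (hΓ : ∀ i j k, ContDiffOn ℝ (⊤ : ℕ∞) (Γ i j k) U)
    (he : ∀ i, ContDiffOn ℝ (⊤ : ℕ∞) (e i) U)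
    (hX : ∀ a i, ContDiffOn ℝ (⊤ : ℕ∞) (X a i) U)
    (hcomm : ∀ i j k, ∀ x ∈ U, c i j k x = c i k j x)
    (hassoc : ∀ i j k l, ∀ x ∈ U,
      (∑ s, c s i j x * c l s k x) = ∑ s, c s j k x * c l i s x)
    (hunit : ∀ i s, ∀ x ∈ U, (∑ k, e k x * c i k s x) = if i = s then 1 else 0)
    (hHM : ∀ k i m j l, ∀ x ∈ U,
      (∑ s, pd s (c k i m) x * c s j l x) - (∑ s, pd s (c k j l) x * c s i m x)
        + (∑ s, pd i (c s j l) x * c k s m x) + (∑ s, pd m (c s j l) x * c k s i x)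
        - (∑ s, pd l (c s i m) x * c k j s x) - (∑ s, pd j (c s i m) x * c k l s x) = 0)
    (htor : ∀ i j k, ∀ x ∈ U, Γ i j k x = Γ i k j x)
    (hflate : ∀ i j, ∀ x ∈ U, pd j (e i) x + (∑ s, Γ i j s x * e s x) = 0)
    (hind : ∀ x ∈ U, LinearIndependent ℝ (fun a : Fin n => (fun i : Fin n => X a i x)))
    (hdX : ∀ a, ∀ i j k, ∀ x ∈ U,
      covT Γ (Xcirc c (X a)) j i k x = covT Γ (Xcirc c (X a)) k i j x) :
    ∀ i j k s, ∀ x ∈ U, covC Γ c j i k s x = covC Γ c k i j s x := by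
  intro i0 j0 k0 s0 x hx
  -- differentiability at x
  have hdc : ∀ i j k, DifferentiableAt ℝ (c i j k) x := fun i j k => diffAt hU hx (hc i j k)
  have hde : ∀ i, DifferentiableAt ℝ (e i) x := fun i => diffAt hU hx (he i)
  have hdXa : ∀ a i, DifferentiableAt ℝ (X a i) x := fun a i => diffAt hU hx (hX a i)
  -- unit contractions
  have hu1 : ∀ p q, ∀ y ∈ U, (∑ m, c p q m y * e m y) = if p = q then 1 else 0 := by
    intro p q y hy
    rw [← hunit p q y hy]
    exact Finset.sum_congr rfl fun m _ => by rw [hcomm p q m y hy, mul_comm]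
  have hu2 : ∀ p q, ∀ y ∈ U, (∑ m, c p m q y * e m y) = if p = q then 1 else 0 := by
    intro p q y hy
    rw [← hunit p q y hy]
    exact Finset.sum_congr rfl fun m _ => mul_comm _ _
  have hu1x : ∀ p q, (∑ m, c p q m x * e m x) = if p = q then 1 else 0 := fun p q =>
    hu1 p q x hx
  have hu2x : ∀ p q, (∑ m, c p m q x * e m x) = if p = q then 1 else 0 := fun p q =>
    hu2 p q x hx
  have hflate' : ∀ i j, pd j (e i) x = -∑ s, Γ i j s x * e s x := by
    intro i j
    have := hflate i j x hx
    linarith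
  -- E1 : derivative of unit contraction
  have E1 : ∀ l p q, (∑ m, pd l (c p q m) x * e m x) = -∑ m, c p q m x * pd l (e m) x := by
    intro l p q
    have h1 : pd l (fun y => ∑ m, c p q m y * e m y) x
        = pd l (fun _ => if p = q then (1:ℝ) else 0) x := pd_congr hU hx (hu1 p q) l
    rw [pd_const] at h1
    rw [pd_sum (fun m => fun y => c p q m y * e m y) (fun m => (hdc p q m).mul (hde m)) l] at h1
    rw [Finset.sum_congr rfl (fun m _ => pd_mul (hdc p q m) (hde m) l),
      Finset.sum_add_distrib] at h1
    linarith
  -- E3 : double contraction of ∂c with e ⊗ e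
  have E3 : ∀ l k, (∑ i, ∑ m, pd l (c k i m) x * e i x * e m x) = - pd l (e k) x := by
    intro l k
    have hGU : ∀ y ∈ U, (∑ i, (∑ m, c k i m y * e m y) * e i y) = e k y := by
      intro y hy
      rw [Finset.sum_congr rfl (fun i _ => by rw [hu1 k i y hy])]
      simp
    have h1 : pd l (fun y => ∑ i, (∑ m, c k i m y * e m y) * e i y) x = pd l (e k) x :=
      pd_congr hU hx hGU l
    have hinner : ∀ i, DifferentiableAt ℝ (fun y => ∑ m, c k i m y * e m y) x := fun i =>
      DifferentiableAt.fun_sum (fun m _ => (hdc k i m).mul (hde m))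
    rw [pd_sum _ (fun i => (hinner i).fun_mul (hde i)) l] at h1
    have h2 : ∀ i ∈ (Finset.univ : Finset (Fin n)),
        pd l (fun y => (∑ m, c k i m y * e m y) * e i y) x
        = (∑ m, (pd l (c k i m) x * e m x + c k i m x * pd l (e m) x)) * e i x
          + (if k = i then (1:ℝ) else 0) * pd l (e i) x := by
      intro i _
      rw [pd_mul (hinner i) (hde i) l, pd_sum _ (fun m => (hdc k i m).fun_mul (hde m)) l,
        Finset.sum_congr rfl (fun m _ => pd_mul (hdc k i m) (hde m) l), hu1 k i x hx]
    rw [Finset.sum_congr rfl h2, Finset.sum_add_distrib] at h1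
    have hd1 : (∑ i, (if k = i then (1:ℝ) else 0) * pd l (e i) x) = pd l (e k) x := by simp
    rw [hd1] at h1
    have hd2 : (∑ i, (∑ m, (pd l (c k i m) x * e m x + c k i m x * pd l (e m) x)) * e i x)
        = (∑ i, ∑ m, pd l (c k i m) x * e i x * e m x)
          + ∑ m, pd l (e m) x * ∑ i, c k i m x * e i x := by
      have hrow : ∀ i, (∑ m, (pd l (c k i m) x * e m x + c k i m x * pd l (e m) x)) * e i x
          = (∑ m, pd l (c k i m) x * e i x * e m x) + ∑ m, c k i m x * e i x * pd l (e m) x := by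
        intro i
        rw [Finset.sum_mul, ← Finset.sum_add_distrib]
        exact Finset.sum_congr rfl fun m _ => by ring
      rw [Finset.sum_congr rfl (fun i (_ : i ∈ Finset.univ) => hrow i), Finset.sum_add_distrib]
      congr 1
      rw [Finset.sum_comm]
      exact Finset.sum_congr rfl fun m _ => by
        rw [Finset.mul_sum]
        exact Finset.sum_congr rfl fun i _ => by ring
    rw [hd2] at h1
    have hd3 : (∑ m, pd l (e m) x * ∑ i, c k i m x * e i x) = pd l (e k) x := by
      rw [Finset.sum_congr rfl (fun m (_ : m ∈ Finset.univ) => by rw [hu2 k m x hx])]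
      simp
    rw [hd3] at h1
    linarith
  -- H2 : ∇c contracted with e in the last lower slot vanishes
  have H2 : ∀ l k i, (∑ m, covC Γ c l k i m x * e m x) = 0 := by
    intro l k i
    have TA : (∑ m, pd l (c k i m) x * e m x) = ∑ m, c k i m x * ∑ s, Γ m l s x * e s x := by
      rw [E1 l k i]
      have h1 : ∀ m ∈ (Finset.univ : Finset (Fin n)),
          c k i m x * pd l (e m) x = -(c k i m x * ∑ s, Γ m l s x * e s x) := by
        intro m _; rw [hflate' m l]; ring
      rw [Finset.sum_congr rfl h1, Finset.sum_neg_distrib, neg_neg]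
    have TB : (∑ m, (∑ s, Γ k l s x * c s i m x) * e m x) = Γ k l i x := by
      have h1 : ∀ m ∈ (Finset.univ : Finset (Fin n)),
          (∑ s, Γ k l s x * c s i m x) * e m x = ∑ s, Γ k l s x * (c s i m x * e m x) := by
        intro m _; rw [Finset.sum_mul]; exact Finset.sum_congr rfl fun s _ => by ring
      rw [Finset.sum_congr rfl h1, Finset.sum_comm]
      have h2 : ∀ s ∈ (Finset.univ : Finset (Fin n)),
          (∑ m, Γ k l s x * (c s i m x * e m x)) = Γ k l s x * (if s = i then 1 else 0) := by
        intro s _; rw [← Finset.mul_sum, hu1x s i]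
      rw [Finset.sum_congr rfl h2]
      simp
    have TC : (∑ m, (∑ s, Γ s l i x * c k s m x) * e m x) = Γ k l i x := by
      have h1 : ∀ m ∈ (Finset.univ : Finset (Fin n)),
          (∑ s, Γ s l i x * c k s m x) * e m x = ∑ s, Γ s l i x * (c k s m x * e m x) := by
        intro m _; rw [Finset.sum_mul]; exact Finset.sum_congr rfl fun s _ => by ring
      rw [Finset.sum_congr rfl h1, Finset.sum_comm]
      have h2 : ∀ s ∈ (Finset.univ : Finset (Fin n)),
          (∑ m, Γ s l i x * (c k s m x * e m x)) = Γ s l i x * (if k = s then 1 else 0) := by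
        intro s _; rw [← Finset.mul_sum, hu1x k s]
      rw [Finset.sum_congr rfl h2]
      simp
    have TD : (∑ m, (∑ s, Γ s l m x * c k i s x) * e m x)
        = ∑ m, c k i m x * ∑ s, Γ m l s x * e s x := by
      have h1 : ∀ m ∈ (Finset.univ : Finset (Fin n)),
          (∑ s, Γ s l m x * c k i s x) * e m x = ∑ s, c k i s x * (Γ s l m x * e m x) := by
        intro m _; rw [Finset.sum_mul]; exact Finset.sum_congr rfl fun s _ => by ring
      rw [Finset.sum_congr rfl h1, Finset.sum_comm]
      exact Finset.sum_congr rfl fun s _ => by rw [Finset.mul_sum]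
    have expand : (∑ m, covC Γ c l k i m x * e m x)
        = (∑ m, pd l (c k i m) x * e m x) + (∑ m, (∑ s, Γ k l s x * c s i m x) * e m x)
          - (∑ m, (∑ s, Γ s l i x * c k s m x) * e m x)
          - (∑ m, (∑ s, Γ s l m x * c k i s x) * e m x) := by
      rw [← Finset.sum_add_distrib, ← Finset.sum_sub_distrib, ← Finset.sum_sub_distrib]
      exact Finset.sum_congr rfl fun m _ => by
        show (pd l (c k i m) x + (∑ s, Γ k l s x * c s i m x)
          - (∑ s, Γ s l i x * c k s m x) - (∑ s, Γ s l m x * c k i s x)) * e m x = _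
        ring
    rw [expand, TA, TB, TC, TD]
    ring
  -- covC is symmetric in its last two lower slots
  have hsymC : ∀ l i p q, covC Γ c l i p q x = covC Γ c l i q p x := by
    intro l i p q
    have h1 : pd l (c i p q) x = pd l (c i q p) x :=
      pd_congr hU hx (fun y hy => hcomm i p q y hy) l
    show pd l (c i p q) x + (∑ s, Γ i l s x * c s p q x)
        - (∑ s, Γ s l p x * c i s q x) - (∑ s, Γ s l q x * c i p s x)
      = pd l (c i q p) x + (∑ s, Γ i l s x * c s q p x)
        - (∑ s, Γ s l q x * c i s p x) - (∑ s, Γ s l p x * c i q s x)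
    rw [h1,
      show (∑ s, Γ i l s x * c s p q x) = ∑ s, Γ i l s x * c s q p x from
        Finset.sum_congr rfl fun s _ => by rw [hcomm s p q x hx],
      show (∑ s, Γ s l p x * c i s q x) = ∑ s, Γ s l p x * c i q s x from
        Finset.sum_congr rfl fun s _ => by rw [hcomm i s q x hx],
      show (∑ s, Γ s l q x * c i p s x) = ∑ s, Γ s l q x * c i s p x from
        Finset.sum_congr rfl fun s _ => by rw [hcomm i p s x hx]]
    ring
  -- H7 : associativity symmetry
  have H7 : ∀ i j k q, (∑ p, c i j p x * c p k q x) = ∑ p, c i k p x * c p j q x := by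
    intro i j k q
    have h := hassoc k q j i x hx
    calc (∑ p, c i j p x * c p k q x)
        = ∑ p, c p k q x * c i p j x := Finset.sum_congr rfl fun p _ => by
          rw [hcomm i j p x hx]; ring
      _ = ∑ p, c p q j x * c i k p x := h
      _ = ∑ p, c i k p x * c p j q x := Finset.sum_congr rfl fun p _ => by
          rw [hcomm p q j x hx]; ring
  -- H4 : ∇_e c = 0
  have H4 : ∀ k j l, (∑ m, e m x * covC Γ c m k j l x) = 0 := by
    intro k j l
    have h0 : (∑ i, ∑ m, e i x * e m x *
        ((∑ s, pd s (c k i m) x * c s j l x) - (∑ s, pd s (c k j l) x * c s i m x)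
          + (∑ s, pd i (c s j l) x * c k s m x) + (∑ s, pd m (c s j l) x * c k s i x)
          - (∑ s, pd l (c s i m) x * c k j s x) - (∑ s, pd j (c s i m) x * c k l s x))) = 0 := by
      refine Finset.sum_eq_zero fun i _ => Finset.sum_eq_zero fun m _ => ?_
      rw [hHM k i m j l x hx, mul_zero]
    simp only [mul_sub, mul_add, Finset.sum_sub_distrib, Finset.sum_add_distrib] at h0
    have hT1 : (∑ i, ∑ m, e i x * e m x * ∑ s, pd s (c k i m) x * c s j l x)
        = -∑ s, pd s (e k) x * c s j l x := by
      rw [swap3 (fun s i m => pd s (c k i m) x * c s j l x) (fun i => e i x) (fun m => e m x)]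
      rw [← Finset.sum_neg_distrib]
      refine Finset.sum_congr rfl fun s _ => ?_
      have h1 : (∑ i, ∑ m, pd s (c k i m) x * c s j l x * e i x * e m x)
          = (∑ i, ∑ m, pd s (c k i m) x * e i x * e m x) * c s j l x := by
        rw [Finset.sum_mul]
        refine Finset.sum_congr rfl fun i _ => ?_
        rw [Finset.sum_mul]
        exact Finset.sum_congr rfl fun m _ => by ring
      rw [h1, E3 s k]
      ring
    have he3 : ∀ s, (∑ i, ∑ m, c s i m x * e i x * e m x) = e s x := by
      intro s
      have h1 : ∀ i ∈ (Finset.univ : Finset (Fin n)),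
          (∑ m, c s i m x * e i x * e m x) = (if s = i then 1 else 0) * e i x := by
        intro i _
        rw [← hu1x s i, Finset.sum_mul]
        exact Finset.sum_congr rfl fun m _ => by ring
      rw [Finset.sum_congr rfl h1]
      simp
    have hT2 : (∑ i, ∑ m, e i x * e m x * ∑ s, pd s (c k j l) x * c s i m x)
        = ∑ s, pd s (c k j l) x * e s x := by
      rw [swap3 (fun s i m => pd s (c k j l) x * c s i m x) (fun i => e i x) (fun m => e m x)]
      refine Finset.sum_congr rfl fun s _ => ?_
      have h1 : (∑ i, ∑ m, pd s (c k j l) x * c s i m x * e i x * e m x)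
          = pd s (c k j l) x * ∑ i, ∑ m, c s i m x * e i x * e m x := by
        rw [Finset.mul_sum]
        refine Finset.sum_congr rfl fun i _ => ?_
        rw [Finset.mul_sum]
        exact Finset.sum_congr rfl fun m _ => by ring
      rw [h1, he3 s]
    have hT3 : (∑ i, ∑ m, e i x * e m x * ∑ s, pd i (c s j l) x * c k s m x)
        = ∑ s, pd s (c k j l) x * e s x := by
      rw [swap3 (fun s i m => pd i (c s j l) x * c k s m x) (fun i => e i x) (fun m => e m x)]
      have h1 : ∀ s ∈ (Finset.univ : Finset (Fin n)),
          (∑ i, ∑ m, pd i (c s j l) x * c k s m x * e i x * e m x)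
          = (∑ i, pd i (c s j l) x * e i x) * (if k = s then 1 else 0) := by
        intro s _
        rw [← hu1x k s, Finset.sum_mul]
        refine Finset.sum_congr rfl fun i _ => ?_
        rw [Finset.mul_sum]
        exact Finset.sum_congr rfl fun m _ => by ring
      rw [Finset.sum_congr rfl h1]
      simp
    have hT4 : (∑ i, ∑ m, e i x * e m x * ∑ s, pd m (c s j l) x * c k s i x)
        = ∑ s, pd s (c k j l) x * e s x := by
      rw [swap3 (fun s i m => pd m (c s j l) x * c k s i x) (fun i => e i x) (fun m => e m x)]
      have h1 : ∀ s ∈ (Finset.univ : Finset (Fin n)),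
          (∑ i, ∑ m, pd m (c s j l) x * c k s i x * e i x * e m x)
          = (if k = s then 1 else 0) * (∑ m, pd m (c s j l) x * e m x) := by
        intro s _
        rw [← hu1x k s, Finset.sum_mul_sum]
        exact Finset.sum_congr rfl fun i _ => Finset.sum_congr rfl fun m _ => by ring
      rw [Finset.sum_congr rfl h1]
      simp
    have hT5 : (∑ i, ∑ m, e i x * e m x * ∑ s, pd l (c s i m) x * c k j s x)
        = -∑ s, pd l (e s) x * c k j s x := by
      rw [swap3 (fun s i m => pd l (c s i m) x * c k j s x) (fun i => e i x) (fun m => e m x)]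
      rw [← Finset.sum_neg_distrib]
      refine Finset.sum_congr rfl fun s _ => ?_
      have h1 : (∑ i, ∑ m, pd l (c s i m) x * c k j s x * e i x * e m x)
          = (∑ i, ∑ m, pd l (c s i m) x * e i x * e m x) * c k j s x := by
        rw [Finset.sum_mul]
        refine Finset.sum_congr rfl fun i _ => ?_
        rw [Finset.sum_mul]
        exact Finset.sum_congr rfl fun m _ => by ring
      rw [h1, E3 l s]
      ring
    have hT6 : (∑ i, ∑ m, e i x * e m x * ∑ s, pd j (c s i m) x * c k l s x)
        = -∑ s, pd j (e s) x * c k l s x := by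
      rw [swap3 (fun s i m => pd j (c s i m) x * c k l s x) (fun i => e i x) (fun m => e m x)]
      rw [← Finset.sum_neg_distrib]
      refine Finset.sum_congr rfl fun s _ => ?_
      have h1 : (∑ i, ∑ m, pd j (c s i m) x * c k l s x * e i x * e m x)
          = (∑ i, ∑ m, pd j (c s i m) x * e i x * e m x) * c k l s x := by
        rw [Finset.sum_mul]
        refine Finset.sum_congr rfl fun i _ => ?_
        rw [Finset.sum_mul]
        exact Finset.sum_congr rfl fun m _ => by ring
      rw [h1, E3 j s]
      ring
    rw [hT1, hT2, hT3, hT4, hT5, hT6] at h0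
    have expand : (∑ m, e m x * covC Γ c m k j l x)
        = (∑ m, pd m (c k j l) x * e m x) + (∑ m, e m x * ∑ s, Γ k m s x * c s j l x)
          - (∑ m, e m x * ∑ s, Γ s m j x * c k s l x)
          - (∑ m, e m x * ∑ s, Γ s m l x * c k j s x) := by
      rw [← Finset.sum_add_distrib, ← Finset.sum_sub_distrib, ← Finset.sum_sub_distrib]
      exact Finset.sum_congr rfl fun m _ => by
        show e m x * (pd m (c k j l) x + (∑ s, Γ k m s x * c s j l x)
          - (∑ s, Γ s m j x * c k s l x) - (∑ s, Γ s m l x * c k j s x)) = _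
        ring
    have W1 : (∑ s, pd s (e k) x * c s j l x)
        = -∑ s, ∑ p, Γ k s p x * e p x * c s j l x := by
      rw [← Finset.sum_neg_distrib]
      refine Finset.sum_congr rfl fun s _ => ?_
      rw [hflate' k s, neg_mul, Finset.sum_mul]
    have W2 : (∑ s, pd j (e s) x * c k l s x)
        = -∑ s, ∑ p, Γ s j p x * e p x * c k l s x := by
      rw [← Finset.sum_neg_distrib]
      refine Finset.sum_congr rfl fun s _ => ?_
      rw [hflate' s j, neg_mul, Finset.sum_mul]
    have W3 : (∑ s, pd l (e s) x * c k j s x)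
        = -∑ s, ∑ p, Γ s l p x * e p x * c k j s x := by
      rw [← Finset.sum_neg_distrib]
      refine Finset.sum_congr rfl fun s _ => ?_
      rw [hflate' s l, neg_mul, Finset.sum_mul]
    have A1 : (∑ m, e m x * ∑ s, Γ k m s x * c s j l x)
        = ∑ s, ∑ p, Γ k s p x * e p x * c s j l x := by
      have h1 : ∀ m ∈ (Finset.univ : Finset (Fin n)),
          e m x * (∑ s, Γ k m s x * c s j l x) = ∑ s, Γ k s m x * e m x * c s j l x := by
        intro m _
        rw [Finset.mul_sum]
        exact Finset.sum_congr rfl fun s _ => by rw [htor k m s x hx]; ring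
      rw [Finset.sum_congr rfl h1, Finset.sum_comm]
    have A2 : (∑ m, e m x * ∑ s, Γ s m j x * c k s l x)
        = ∑ s, ∑ p, Γ s j p x * e p x * c k l s x := by
      have h1 : ∀ m ∈ (Finset.univ : Finset (Fin n)),
          e m x * (∑ s, Γ s m j x * c k s l x) = ∑ s, Γ s j m x * e m x * c k l s x := by
        intro m _
        rw [Finset.mul_sum]
        exact Finset.sum_congr rfl fun s _ => by
          rw [htor s m j x hx, hcomm k s l x hx]; ring
      rw [Finset.sum_congr rfl h1, Finset.sum_comm]
    have A3 : (∑ m, e m x * ∑ s, Γ s m l x * c k j s x)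
        = ∑ s, ∑ p, Γ s l p x * e p x * c k j s x := by
      have h1 : ∀ m ∈ (Finset.univ : Finset (Fin n)),
          e m x * (∑ s, Γ s m l x * c k j s x) = ∑ s, Γ s l m x * e m x * c k j s x := by
        intro m _
        rw [Finset.mul_sum]
        exact Finset.sum_congr rfl fun s _ => by rw [htor s m l x hx]; ring
      rw [Finset.sum_congr rfl h1, Finset.sum_comm]
    rw [expand, A1, A2, A3]
    rw [W1, W2, W3] at h0
    linarith
  -- the vector fields ∇X and their e-contractions
  set N : Fin n → Fin n → Fin n → ℝ :=
    fun a k p => pd k (X a p) x + ∑ q, Γ p k q x * X a q x with hNdef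
  set M : Fin n → Fin n → ℝ := fun a p => ∑ j, e j x * N a j p with hMdef
  have hpdV : ∀ a i k j, pd j (Xcirc c (X a) i k) x
      = ∑ p, (pd j (c i k p) x * X a p x + c i k p x * pd j (X a p) x) := by
    intro a i k j
    show pd j (fun y => ∑ p, c i k p y * X a p y) x = _
    rw [pd_sum (fun p => fun y => c i k p y * X a p y) (fun p => (hdc i k p).mul (hdXa a p)) j]
    exact Finset.sum_congr rfl fun p _ => pd_mul (hdc i k p) (hdXa a p) j
  -- H5
  have H5 : ∀ a i j k, (∑ p, (covC Γ c j i k p x - covC Γ c k i j p x) * X a p x)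
      = (∑ p, c i j p x * N a k p) - ∑ p, c i k p x * N a j p := by
    intro a i j k
    have h := hdX a i j k x hx
    simp only [covT, Xcirc] at h
    rw [hpdV a i k j, hpdV a i j k] at h
    have hc1 : ∀ i' j' k', (∑ s, Γ i' j' s x * ∑ p, c s k' p x * X a p x)
        = ∑ p, (∑ s, Γ i' j' s x * c s k' p x) * X a p x := by
      intro i' j' k'
      calc (∑ s, Γ i' j' s x * ∑ p, c s k' p x * X a p x)
          = ∑ s, ∑ p, Γ i' j' s x * (c s k' p x * X a p x) := by
            exact Finset.sum_congr rfl fun s _ => Finset.mul_sum _ _ _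
        _ = ∑ p, ∑ s, Γ i' j' s x * (c s k' p x * X a p x) := Finset.sum_comm
        _ = ∑ p, (∑ s, Γ i' j' s x * c s k' p x) * X a p x := by
            refine Finset.sum_congr rfl fun p _ => ?_
            rw [Finset.sum_mul]
            exact Finset.sum_congr rfl fun s _ => by ring
    have hc2 : ∀ j' k', (∑ s, Γ s j' k' x * ∑ p, c i s p x * X a p x)
        = ∑ p, (∑ s, Γ s j' k' x * c i s p x) * X a p x := by
      intro j' k'
      calc (∑ s, Γ s j' k' x * ∑ p, c i s p x * X a p x)
          = ∑ s, ∑ p, Γ s j' k' x * (c i s p x * X a p x) := by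
            exact Finset.sum_congr rfl fun s _ => Finset.mul_sum _ _ _
        _ = ∑ p, ∑ s, Γ s j' k' x * (c i s p x * X a p x) := Finset.sum_comm
        _ = ∑ p, (∑ s, Γ s j' k' x * c i s p x) * X a p x := by
            refine Finset.sum_congr rfl fun p _ => ?_
            rw [Finset.sum_mul]
            exact Finset.sum_congr rfl fun s _ => by ring
    rw [hc1 i j k, hc1 i k j, hc2 j k, hc2 k j, Finset.sum_add_distrib,
      Finset.sum_add_distrib] at h
    have hR : (∑ p, (∑ s, Γ s j k x * c i s p x) * X a p x)
        = ∑ p, (∑ s, Γ s k j x * c i s p x) * X a p x := by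
      refine Finset.sum_congr rfl fun p _ => ?_
      refine congrArg (· * X a p x) ?_
      exact Finset.sum_congr rfl fun s _ => by rw [htor s j k x hx]
    have hSG : ∀ j' k', (∑ p, (∑ s, Γ s k' p x * c i j' s x) * X a p x)
        = ∑ p, c i j' p x * ∑ q, Γ p k' q x * X a q x := by
      intro j' k'
      calc (∑ p, (∑ s, Γ s k' p x * c i j' s x) * X a p x)
          = ∑ p, ∑ s, Γ s k' p x * c i j' s x * X a p x := by
            exact Finset.sum_congr rfl fun p _ => Finset.sum_mul _ _ _
        _ = ∑ s, ∑ p, Γ s k' p x * c i j' s x * X a p x := Finset.sum_comm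
        _ = ∑ p, c i j' p x * ∑ q, Γ p k' q x * X a q x := by
            refine Finset.sum_congr rfl fun s _ => ?_
            rw [Finset.mul_sum]
            exact Finset.sum_congr rfl fun p _ => by ring
    have hLHS : (∑ p, (covC Γ c j i k p x - covC Γ c k i j p x) * X a p x)
        = ((∑ p, pd j (c i k p) x * X a p x) - ∑ p, pd k (c i j p) x * X a p x)
          + ((∑ p, (∑ s, Γ i j s x * c s k p x) * X a p x)
              - ∑ p, (∑ s, Γ i k s x * c s j p x) * X a p x)
          - ((∑ p, (∑ s, Γ s j k x * c i s p x) * X a p x)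
              - ∑ p, (∑ s, Γ s k j x * c i s p x) * X a p x)
          - ((∑ p, (∑ s, Γ s j p x * c i k s x) * X a p x)
              - ∑ p, (∑ s, Γ s k p x * c i j s x) * X a p x) := by
      rw [← Finset.sum_sub_distrib, ← Finset.sum_sub_distrib, ← Finset.sum_add_distrib,
        ← Finset.sum_sub_distrib, ← Finset.sum_sub_distrib, ← Finset.sum_sub_distrib,
        ← Finset.sum_sub_distrib]
      refine Finset.sum_congr rfl fun p _ => ?_
      show (pd j (c i k p) x + (∑ s, Γ i j s x * c s k p x)
          - (∑ s, Γ s j k x * c i s p x) - (∑ s, Γ s j p x * c i k s x)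
          - (pd k (c i j p) x + (∑ s, Γ i k s x * c s j p x)
          - (∑ s, Γ s k j x * c i s p x) - (∑ s, Γ s k p x * c i j s x))) * X a p x = _
      ring
    have hRHS1 : (∑ p, c i j p x * N a k p)
        = (∑ p, c i j p x * pd k (X a p) x)
          + ∑ p, c i j p x * ∑ q, Γ p k q x * X a q x := by
      rw [← Finset.sum_add_distrib]
      exact Finset.sum_congr rfl fun p _ => by rw [hNdef]; ring
    have hRHS2 : (∑ p, c i k p x * N a j p)
        = (∑ p, c i k p x * pd j (X a p) x)
          + ∑ p, c i k p x * ∑ q, Γ p j q x * X a q x := by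
      rw [← Finset.sum_add_distrib]
      exact Finset.sum_congr rfl fun p _ => by rw [hNdef]; ring
    rw [hLHS, hRHS1, hRHS2, hSG j k, hSG k j] at *
    linarith [h, hR]
  -- H6
  have H6 : ∀ a k i, N a k i = ∑ p, c i k p x * M a p := by
    intro a k i
    have h1 : (∑ j', e j' x * ∑ p, (covC Γ c j' i k p x - covC Γ c k i j' p x) * X a p x)
        = ∑ j', e j' x * ((∑ p, c i j' p x * N a k p) - ∑ p, c i k p x * N a j' p) :=
      Finset.sum_congr rfl fun j' _ => by rw [H5 a i j' k]
    have hz : (∑ j', e j' x * ∑ p, (covC Γ c j' i k p x - covC Γ c k i j' p x) * X a p x)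
        = 0 := by
      have hsplit : ∀ j' ∈ (Finset.univ : Finset (Fin n)),
          e j' x * (∑ p, (covC Γ c j' i k p x - covC Γ c k i j' p x) * X a p x)
          = (∑ p, covC Γ c j' i k p x * X a p x * e j' x)
            - ∑ p, covC Γ c k i j' p x * e j' x * X a p x := by
        intro j' _
        rw [Finset.mul_sum, ← Finset.sum_sub_distrib]
        exact Finset.sum_congr rfl fun p _ => by ring
      rw [Finset.sum_congr rfl hsplit, Finset.sum_sub_distrib]
      have hz1 : (∑ j', ∑ p, covC Γ c j' i k p x * X a p x * e j' x) = 0 := by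
        rw [Finset.sum_comm]
        refine Finset.sum_eq_zero fun p _ => ?_
        have h2 : (∑ j', covC Γ c j' i k p x * X a p x * e j' x)
            = (∑ j', e j' x * covC Γ c j' i k p x) * X a p x := by
          rw [Finset.sum_mul]
          exact Finset.sum_congr rfl fun j' _ => by ring
        rw [h2, H4 i k p, zero_mul]
      have hz2 : (∑ j', ∑ p, covC Γ c k i j' p x * e j' x * X a p x) = 0 := by
        rw [Finset.sum_comm]
        refine Finset.sum_eq_zero fun p _ => ?_
        have h2 : (∑ j', covC Γ c k i j' p x * e j' x * X a p x)
            = (∑ j', covC Γ c k i p j' x * e j' x) * X a p x := by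
          rw [Finset.sum_mul]
          refine Finset.sum_congr rfl fun j' _ => ?_
          rw [hsymC k i j' p]
        rw [h2, H2 k i p, zero_mul]
      rw [hz1, hz2]
      ring
    have hr : (∑ j', e j' x * ((∑ p, c i j' p x * N a k p) - ∑ p, c i k p x * N a j' p))
        = N a k i - ∑ p, c i k p x * M a p := by
      have hsplit : ∀ j' ∈ (Finset.univ : Finset (Fin n)),
          e j' x * ((∑ p, c i j' p x * N a k p) - ∑ p, c i k p x * N a j' p)
          = (∑ p, e j' x * c i j' p x * N a k p)
            - ∑ p, c i k p x * (e j' x * N a j' p) := by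
        intro j' _
        rw [mul_sub, Finset.mul_sum, Finset.mul_sum]
        congr 1 <;> exact Finset.sum_congr rfl fun p _ => by ring
      rw [Finset.sum_congr rfl hsplit, Finset.sum_sub_distrib]
      have hr1 : (∑ j', ∑ p, e j' x * c i j' p x * N a k p) = N a k i := by
        rw [Finset.sum_comm]
        have h2 : ∀ p ∈ (Finset.univ : Finset (Fin n)),
            (∑ j', e j' x * c i j' p x * N a k p) = (if i = p then 1 else 0) * N a k p := by
          intro p _
          rw [← hunit i p x hx, Finset.sum_mul]
        rw [Finset.sum_congr rfl h2]
        simp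
      have hr2 : (∑ j', ∑ p, c i k p x * (e j' x * N a j' p)) = ∑ p, c i k p x * M a p := by
        rw [Finset.sum_comm]
        refine Finset.sum_congr rfl fun p _ => ?_
        rw [← Finset.mul_sum, hMdef]
      rw [hr1, hr2]
    rw [hz] at h1
    rw [hr] at h1
    linarith
  -- H8
  have H8 : ∀ a i j k, (∑ p, (covC Γ c j i k p x - covC Γ c k i j p x) * X a p x) = 0 := by
    intro a i j k
    rw [H5 a i j k]
    have hA : (∑ p, c i j p x * N a k p) = ∑ q, (∑ p, c i j p x * c p k q x) * M a q := by
      calc (∑ p, c i j p x * N a k p)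
          = ∑ p, ∑ q, c i j p x * (c p k q x * M a q) := by
            refine Finset.sum_congr rfl fun p _ => ?_
            rw [H6 a k p, Finset.mul_sum]
        _ = ∑ q, ∑ p, c i j p x * (c p k q x * M a q) := Finset.sum_comm
        _ = ∑ q, (∑ p, c i j p x * c p k q x) * M a q := by
            refine Finset.sum_congr rfl fun q _ => ?_
            rw [Finset.sum_mul]
            exact Finset.sum_congr rfl fun p _ => by ring
    have hB : (∑ p, c i k p x * N a j p) = ∑ q, (∑ p, c i k p x * c p j q x) * M a q := by
      calc (∑ p, c i k p x * N a j p)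
          = ∑ p, ∑ q, c i k p x * (c p j q x * M a q) := by
            refine Finset.sum_congr rfl fun p _ => ?_
            rw [H6 a j p, Finset.mul_sum]
        _ = ∑ q, ∑ p, c i k p x * (c p j q x * M a q) := Finset.sum_comm
        _ = ∑ q, (∑ p, c i k p x * c p j q x) * M a q := by
            refine Finset.sum_congr rfl fun q _ => ?_
            rw [Finset.sum_mul]
            exact Finset.sum_congr rfl fun p _ => by ring
    rw [hA, hB]
    have h2 : ∀ q ∈ (Finset.univ : Finset (Fin n)),
        (∑ p, c i j p x * c p k q x) * M a q = (∑ p, c i k p x * c p j q x) * M a q := by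
      intro q _
      rw [H7 i j k q]
    rw [Finset.sum_congr rfl h2]
    ring
  -- conclude by linear independence
  haveI : Nonempty (Fin n) := ⟨s0⟩
  have hli := hind x hx
  have hcard : Fintype.card (Fin n) = Module.finrank ℝ (Fin n → ℝ) := by simp
  let B := basisOfLinearIndependentOfCardEqFinrank hli hcard
  have hB : ⇑B = fun a => fun i => X a i x :=
    coe_basisOfLinearIndependentOfCardEqFinrank hli hcard
  set φ : Fin n → ℝ := fun p => covC Γ c j0 i0 k0 p x - covC Γ c k0 i0 j0 p x with hφ
  let ψ : (Fin n → ℝ) →ₗ[ℝ] ℝ :=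
    { toFun := fun w => ∑ p, φ p * w p
      map_add' := by intro a b; simp [mul_add, Finset.sum_add_distrib]
      map_smul' := by
        intro r a
        simp only [Pi.smul_apply, smul_eq_mul, RingHom.id_apply, Finset.mul_sum]
        exact Finset.sum_congr rfl fun p _ => by ring }
  have hψ : ψ = 0 := by
    apply B.ext
    intro a
    have h2 : ψ (B a) = ∑ p, φ p * X a p x := by
      simp only [ψ, LinearMap.coe_mk, AddHom.coe_mk, hB]
    rw [h2]
    simpa using H8 a i0 j0 k0
  have hfin : ψ (Pi.single s0 1) = 0 := by rw [hψ]; rfl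
  have h3 : (∑ p, φ p * (Pi.single s0 1 : Fin n → ℝ) p) = 0 := hfin
  have h0 : φ s0 = 0 := by
    simpa [Pi.single_apply] using h3
  rw [hφ] at h0
  have h4 : covC Γ c j0 i0 k0 s0 x - covC Γ c k0 i0 j0 s0 x = 0 := h0
  linarith
end

section
/- Let n ≥ 1 and let a₀ : U → ℝ be a smooth solution of the single Jordan block equation of size n on an open set U ⊆ ℝⁿ. Then ∂_i ∂_j a₀ = 0 on U for all i, j ∈ {1,…,n} with i + j ≥ n + 2. -/
open Filter Topology
open scoped ContDiff



/-- Partial derivative `∂_i f` with 1-based index `i ∈ {1,…,n}` (zero outside that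
range). -/
noncomputable def pdN {n : ℕ} (i : ℕ) (f : (Fin n → ℝ) → ℝ) : (Fin n → ℝ) → ℝ :=
  if h : 1 ≤ i ∧ i ≤ n then
    fun x => fderiv ℝ f x (Pi.single (⟨i - 1, by omega⟩ : Fin n) 1)
  else 0

/-- The coordinate function `u^i` with 1-based index `i ∈ {1,…,n}` (zero outside
that range). -/
def coordN {n : ℕ} (i : ℕ) : (Fin n → ℝ) → ℝ :=
  if h : 1 ≤ i ∧ i ≤ n then fun x => x ⟨i - 1, by omega⟩ else 0

/-- `a₀` solves the single Jordan block equation of size `n` on `U`: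
for all `i, j ∈ {1,…,n}`,
`Σ_{s=i+1}^{n} u^{s−i+1} ∂_s ∂_j a₀ − Σ_{s=j+1}^{n} u^{s−j+1} ∂_s ∂_i a₀ = 0` on `U`. -/
def SolvesJordan (n : ℕ) (U : Set (Fin n → ℝ)) (a₀ : (Fin n → ℝ) → ℝ) : Prop :=
  ∀ i j : ℕ, 1 ≤ i → i ≤ n → 1 ≤ j → j ≤ n → ∀ x ∈ U,
    (∑ s ∈ Finset.Icc (i + 1) n, coordN (s - i + 1) x * pdN s (pdN j a₀) x)
      - (∑ s ∈ Finset.Icc (j + 1) n, coordN (s - j + 1) x * pdN s (pdN i a₀) x) = 0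

lemma pdN_zero {n : ℕ} (i : ℕ) : pdN (n := n) i (0 : (Fin n → ℝ) → ℝ) = 0 := by
  unfold pdN
  split
  · funext x
    simp [Pi.zero_def, fderiv_const]
  · rfl

lemma pdN_contDiffOn {n : ℕ} {U : Set (Fin n → ℝ)} (hU : IsOpen U) {f : (Fin n → ℝ) → ℝ}
    (hf : ContDiffOn ℝ (⊤ : ℕ∞) f U) (i : ℕ) : ContDiffOn ℝ (⊤ : ℕ∞) (pdN i f) U := by
  unfold pdN
  split
  · exact (hf.fderiv_of_isOpen hU (le_of_eq (by rfl))).clm_apply contDiffOn_const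
  · exact contDiffOn_const

lemma pdN_swap {n : ℕ} {U : Set (Fin n → ℝ)} (hU : IsOpen U) {f : (Fin n → ℝ) → ℝ}
    (hf : ContDiffOn ℝ (⊤ : ℕ∞) f U) (i j : ℕ) {x : Fin n → ℝ} (hx : x ∈ U) :
    pdN i (pdN j f) x = pdN j (pdN i f) x := by
  by_cases hi : 1 ≤ i ∧ i ≤ n
  · by_cases hj : 1 ≤ j ∧ j ≤ n
    · have hfx : ContDiffAt ℝ (⊤ : ℕ∞) f x := (hf x hx).contDiffAt (hU.mem_nhds hx)
      have hfx' : ContDiffAt ℝ (∞ : WithTop ℕ∞) f x := hfx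
      have hdf : DifferentiableAt ℝ (fderiv ℝ f) x :=
        (hfx'.fderiv_right (m := (∞ : WithTop ℕ∞)) (le_of_eq (by rfl))).differentiableAt
          (by simp)
      have key : ∀ v w : Fin n → ℝ,
          fderiv ℝ (fun y => fderiv ℝ f y w) x v = fderiv ℝ (fderiv ℝ f) x v w := by
        intro v w
        rw [fderiv_clm_apply hdf (differentiableAt_const w)]
        simp
      have hsymm := hfx'.isSymmSndFDerivAt (by rw [minSmoothness_of_isRCLikeNormedField]; exact WithTop.coe_le_coe.mpr le_top)
      simp only [pdN, dif_pos hi, dif_pos hj]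
      rw [key, key, hsymm]
    · rw [show pdN j f = 0 from by unfold pdN; rw [dif_neg hj], pdN_zero]
      simp only [pdN, dif_neg hj]
  · rw [show pdN i f = 0 from by unfold pdN; rw [dif_neg hi], pdN_zero]
    simp only [pdN, dif_neg hi]

lemma dens {n : ℕ} (hn2 : 2 ≤ n) {U : Set (Fin n → ℝ)} (hU : IsOpen U)
    {g : (Fin n → ℝ) → ℝ} (hg : ContinuousOn g U)
    (h : ∀ x ∈ U, coordN 2 x * g x = 0) : ∀ x ∈ U, g x = 0 := by
  have hc : ∀ x : Fin n → ℝ, coordN (n := n) 2 x = x ⟨1, by omega⟩ := by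
    intro x
    simp only [coordN, dif_pos (⟨one_le_two, hn2⟩ : 1 ≤ 2 ∧ 2 ≤ n)]
  intro x hx
  by_cases hx1 : x (⟨1, by omega⟩ : Fin n) = 0
  · set e : Fin n → ℝ := Pi.single (⟨1, by omega⟩ : Fin n) 1 with he
    have hcont : Continuous (fun t : ℝ => x + t • e) := by continuity
    have hφ : Tendsto (fun t : ℝ => x + t • e) (𝓝[≠] (0:ℝ)) (𝓝 x) := by
      have h0 : x + (0:ℝ) • e = x := by simp
      simpa [h0] using (hcont.tendsto 0).mono_left nhdsWithin_le_nhds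
    have hmem : ∀ᶠ t in 𝓝[≠] (0:ℝ), x + t • e ∈ U := hφ.eventually_mem (hU.mem_nhds hx)
    have hne : ∀ᶠ t in 𝓝[≠] (0:ℝ), t ≠ 0 := eventually_mem_nhdsWithin
    have hzero : ∀ᶠ t in 𝓝[≠] (0:ℝ), g (x + t • e) = 0 := by
      filter_upwards [hmem, hne] with t htU ht
      have h1 := h _ htU
      rw [hc] at h1
      have hcoord : (x + t • e) ⟨1, by omega⟩ = t := by
        simp [he, hx1, Pi.single_eq_same]
      rw [hcoord] at h1
      rcases mul_eq_zero.mp h1 with h2 | h2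
      · exact absurd h2 ht
      · exact h2
    have hlim : Tendsto (fun t => g (x + t • e)) (𝓝[≠] (0:ℝ)) (𝓝 (g x)) :=
      ((hg.continuousAt (hU.mem_nhds hx)).tendsto).comp hφ
    exact tendsto_nhds_unique hlim ((tendsto_congr' hzero).mpr tendsto_const_nhds)
  · have h1 := h x hx
    rw [hc] at h1
    rcases mul_eq_zero.mp h1 with h2 | h2
    · exact absurd h2 hx1
    · exact h2

lemma mu_lt {A B a b n : ℕ} (hAB : A + 1 ≤ B) (ha : a ≤ n) :
    A * (n + 1) + a < B * (n + 1) + b :=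
  calc A * (n + 1) + a < A * (n + 1) + (n + 1) := by omega
    _ = (A + 1) * (n + 1) := by ring
    _ ≤ B * (n + 1) := Nat.mul_le_mul_right _ hAB
    _ ≤ B * (n + 1) + b := Nat.le_add_right _ _

/-- A solution of the single Jordan block equation of size `n` has
`∂_i ∂_j a₀ = 0` whenever `i + j ≥ n + 2`. -/
theorem stmt9 {n : ℕ} (hn : 1 ≤ n) (U : Set (Fin n → ℝ)) (hU : IsOpen U)
    (a₀ : (Fin n → ℝ) → ℝ) (ha : ContDiffOn ℝ (⊤ : ℕ∞) a₀ U)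
    (hsol : SolvesJordan n U a₀) :
    ∀ i j : ℕ, 1 ≤ i → i ≤ n → 1 ≤ j → j ≤ n → n + 2 ≤ i + j →
      ∀ x ∈ U, pdN i (pdN j a₀) x = 0 := by
  have key : ∀ N : ℕ, ∀ i j : ℕ, 1 ≤ i → i ≤ n → 1 ≤ j → j ≤ n → n + 2 ≤ i + j →
      (2 * n - i - j) * (n + 1) + (n - j) ≤ N → ∀ x ∈ U, pdN i (pdN j a₀) x = 0 := by
    intro N
    induction N using Nat.strong_induction_on with
    | _ N IH =>
      intro i j hi1 hin hj1 hjn hij hN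
      have hn2 : 2 ≤ n := by omega
      have ihp : ∀ i' j' : ℕ, 1 ≤ i' → i' ≤ n → 1 ≤ j' → j' ≤ n → n + 2 ≤ i' + j' →
          (2 * n - i' - j') * (n + 1) + (n - j') < (2 * n - i - j) * (n + 1) + (n - j) →
          ∀ y ∈ U, pdN i' (pdN j' a₀) y = 0 := by
        intro i' j' h1 h2 h3 h4 h5 hlt y hy
        exact IH _ (lt_of_lt_of_le hlt hN) i' j' h1 h2 h3 h4 h5 le_rfl y hy
      -- continuity of the target
      have hcontg : ContinuousOn (pdN i (pdN j a₀)) U :=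
        (pdN_contDiffOn hU (pdN_contDiffOn hU ha j) i).continuousOn
      apply dens hn2 hU hcontg
      intro y hy
      have E := hsol (i - 1) j (by omega) (by omega) hj1 hjn y hy
      have hIcc : Finset.Icc (i - 1 + 1) n = insert i (Finset.Icc (i + 1) n) := by
        ext t
        simp only [Finset.mem_Icc, Finset.mem_insert]
        omega
      rw [hIcc, Finset.sum_insert (by simp only [Finset.mem_Icc]; omega)] at E
      have h2 : i - (i - 1) + 1 = 2 := by omega
      rw [h2] at E
      have hrest : ∑ s ∈ Finset.Icc (i + 1) n,
          coordN (s - (i - 1) + 1) y * pdN s (pdN j a₀) y = 0 := by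
        apply Finset.sum_eq_zero
        intro s hs
        simp only [Finset.mem_Icc] at hs
        rw [ihp s j (by omega) (by omega) hj1 hjn (by omega)
          (mu_lt (by omega) (by omega)) y hy, mul_zero]
      have hS2 : ∑ s ∈ Finset.Icc (j + 1) n,
          coordN (s - j + 1) y * pdN s (pdN (i - 1) a₀) y = 0 := by
        apply Finset.sum_eq_zero
        intro s hs
        simp only [Finset.mem_Icc] at hs
        rcases eq_or_lt_of_le hs.1 with hsj | hsj
        · -- s = j + 1 : same level, use symmetry
          rw [pdN_swap hU ha s (i - 1) hy]
          rw [ihp (i - 1) s (by omega) (by omega) (by omega) (by omega) (by omega)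
            (by
              have hA : 2 * n - (i - 1) - s = 2 * n - i - j := by omega
              rw [hA]
              exact Nat.add_lt_add_left (by omega) _) y hy, mul_zero]
        · -- s ≥ j + 2 : higher level
          rw [ihp s (i - 1) (by omega) (by omega) (by omega) (by omega) (by omega)
            (mu_lt (by omega) (by omega)) y hy, mul_zero]
      rw [hrest, hS2] at E
      linarith [E]
  intro i j h1 h2 h3 h4 h5 x hx
  exact key _ i j h1 h2 h3 h4 h5 le_rfl x hx
end

section
/- Let n ≥ 1, let a₀ : U → ℝ be smooth on an open set U ⊆ ℝⁿ, and let h ≥ −1 be an integer. Suppose that ∂_{i+1} ∂_{n−i−h−1} a₀ = ∂_{n−i−h} ∂_i a₀ on U for every i such that all four indices i, i+1, n−i−h−1, n−i−h lie in {1,…,n}. Then for all i, j, ī, j̄ ∈ {1,…,n} with i + j = ī + j̄ and n − i − j = h, one has ∂_i ∂_j a₀ = ∂_ī ∂_j̄ a₀ on U. -/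
/-- Second partial derivatives written via the full second derivative. -/
lemma pd_pd_eq_snd {n : ℕ} {U : Set (Fin n → ℝ)} (hU : IsOpen U)
    {a₀ : (Fin n → ℝ) → ℝ} (ha : ContDiffOn ℝ (⊤ : ℕ∞) a₀ U)
    (v w : Fin n → ℝ) {x : Fin n → ℝ} (hx : x ∈ U) :
    fderiv ℝ (fun y => fderiv ℝ a₀ y w) x v = fderiv ℝ (fderiv ℝ a₀) x v w := by
  have hca : ContDiffAt ℝ (⊤ : ℕ∞) a₀ x := ha.contDiffAt (hU.mem_nhds hx)
  have hd : DifferentiableAt ℝ (fderiv ℝ a₀) x := by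
    have := hca.fderiv_right (m := (1 : ℕ∞)) (by exact_mod_cast le_top)
    exact this.differentiableAt (by simp)
  have := fderiv_clm_apply (c := fderiv ℝ a₀) (u := fun _ => w) hd
    (differentiableAt_const _)
  rw [show (fun y => fderiv ℝ a₀ y w) = (fun y => (fderiv ℝ a₀ y) ((fun _ => w) y)) from rfl,
    this]
  simp

/-- Symmetry of second partials on an open set. -/
lemma pd_pd_symm {n : ℕ} {U : Set (Fin n → ℝ)} (hU : IsOpen U)
    {a₀ : (Fin n → ℝ) → ℝ} (ha : ContDiffOn ℝ (⊤ : ℕ∞) a₀ U)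
    (i j : ℕ) (hi1 : 1 ≤ i) (hi2 : i ≤ n) (hj1 : 1 ≤ j) (hj2 : j ≤ n)
    {x : Fin n → ℝ} (hx : x ∈ U) :
    pdN i (pdN j a₀) x = pdN j (pdN i a₀) x := by
  have hca : ContDiffAt ℝ (⊤ : ℕ∞) a₀ x := ha.contDiffAt (hU.mem_nhds hx)
  have hsymm : IsSymmSndFDerivAt ℝ a₀ x := by
    apply hca.isSymmSndFDerivAt
    rw [minSmoothness_of_isRCLikeNormedField]
    exact WithTop.coe_le_coe.2 (le_top : (2:ℕ∞) ≤ ⊤)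
  simp only [pdN, dif_pos (And.intro hi1 hi2), dif_pos (And.intro hj1 hj2)]
  rw [pd_pd_eq_snd hU ha _ _ hx, pd_pd_eq_snd hU ha _ _ hx]
  exact hsymm _ _

/-- If `∂_{i+1} ∂_{n−i−h−1} a₀ = ∂_{n−i−h} ∂_i a₀` whenever all four indices lie in
`{1,…,n}`, then `∂_i ∂_j a₀ = ∂_{i'} ∂_{j'} a₀` whenever `i + j = i' + j'` and
`n − i − j = h`. -/
theorem stmt10 {n : ℕ} (hn : 1 ≤ n) (U : Set (Fin n → ℝ)) (hU : IsOpen U)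
    (a₀ : (Fin n → ℝ) → ℝ) (ha : ContDiffOn ℝ (⊤ : ℕ∞) a₀ U)
    (h : ℤ) (hh : -1 ≤ h)
    (hyp : ∀ i : ℕ, 1 ≤ i → i + 1 ≤ n → 1 ≤ (n : ℤ) - i - h - 1 → (n : ℤ) - i - h ≤ (n : ℤ) →
      ∀ x ∈ U, pdN (i + 1) (pdN ((n : ℤ) - i - h - 1).toNat a₀) x
             = pdN ((n : ℤ) - i - h).toNat (pdN i a₀) x) :
    ∀ i j i' j' : ℕ, 1 ≤ i → i ≤ n → 1 ≤ j → j ≤ n → 1 ≤ i' → i' ≤ n → 1 ≤ j' → j' ≤ n →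
      i + j = i' + j' → (n : ℤ) - i - j = h →
      ∀ x ∈ U, pdN i (pdN j a₀) x = pdN i' (pdN j' a₀) x := by
  -- one step along the antidiagonal
  have step : ∀ i j : ℕ, 1 ≤ i → i + 1 ≤ n → 2 ≤ j → j ≤ n → (n : ℤ) - i - j = h →
      ∀ x ∈ U, pdN i (pdN j a₀) x = pdN (i + 1) (pdN (j - 1) a₀) x := by
    intro i j hi1 hi2 hj1 hj2 hij x hx
    have e1 : ((n : ℤ) - i - h).toNat = j := by omega
    have e2 : ((n : ℤ) - i - h - 1).toNat = j - 1 := by omega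
    have := hyp i hi1 hi2 (by omega) (by omega) x hx
    rw [e1, e2] at this
    rw [pd_pd_symm hU ha i j hi1 (by omega) (by omega) hj2 hx, ← this]
  -- iterate the step
  have ind : ∀ d i j : ℕ, 1 ≤ i → i + d ≤ n → d + 1 ≤ j → j ≤ n → (n : ℤ) - i - j = h →
      ∀ x ∈ U, pdN i (pdN j a₀) x = pdN (i + d) (pdN (j - d) a₀) x := by
    intro d
    induction d with
    | zero => intro i j _ _ _ _ _ x _; simp
    | succ d ih =>
      intro i j hi1 hi2 hj1 hj2 hij x hx
      have h1 := step i j hi1 (by omega) (by omega) hj2 hij x hx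
      have h2 := ih (i + 1) (j - 1) (by omega) (by omega) (by omega) (by omega)
        (by push_cast [Nat.cast_sub (show 1 ≤ j by omega)]; omega) x hx
      rw [h1, h2, show i + 1 + d = i + (d + 1) by omega, show j - 1 - d = j - (d + 1) by omega]
  intro i j i' j' hi1 hi2 hj1 hj2 hi'1 hi'2 hj'1 hj'2 hsum hij x hx
  rcases le_total i i' with hle | hle
  · have := ind (i' - i) i j hi1 (by omega) (by omega) hj2 hij x hx
    rwa [show i + (i' - i) = i' by omega, show j - (i' - i) = j' by omega] at this
  · have := ind (i - i') i' j' hi'1 (by omega) (by omega) hj'2 (by omega) x hx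
    rw [show i' + (i - i') = i by omega, show j' - (i - i') = j by omega] at this
    exact this.symm
end

section
/- Let n ≥ 1 and let a₀ : U → ℝ be a smooth solution of the single Jordan block equation of size n on an open set U ⊆ ℝⁿ. Then for all i, j, ī, j̄ ∈ {1,…,n} with i + j = ī + j̄ and i + j ≤ n + 1, one has ∂_i ∂_j a₀ = ∂_ī ∂_j̄ a₀ on U. -/
section Helpers

variable {n : ℕ}

private lemma pdN_eq {i : ℕ} (h1 : 1 ≤ i) (h2 : i ≤ n) (f : (Fin n → ℝ) → ℝ) :
    pdN i f = fun x => fderiv ℝ f x (Pi.single (⟨i - 1, by omega⟩ : Fin n) 1) := by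
  simp only [pdN, dif_pos (⟨h1, h2⟩ : 1 ≤ i ∧ i ≤ n)]

private lemma pdN_apply {i : ℕ} (h1 : 1 ≤ i) (h2 : i ≤ n) (f : (Fin n → ℝ) → ℝ)
    (x : Fin n → ℝ) :
    pdN i f x = fderiv ℝ f x (Pi.single (⟨i - 1, by omega⟩ : Fin n) 1) := by
  rw [pdN_eq h1 h2]

private lemma pdN_out {i : ℕ} (h : ¬ (1 ≤ i ∧ i ≤ n)) (f : (Fin n → ℝ) → ℝ) :
    pdN i f = 0 := by
  simp only [pdN, dif_neg h]

private lemma pdN_zero_fun (i : ℕ) : pdN (n := n) i (0 : (Fin n → ℝ) → ℝ) = 0 := by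
  by_cases h : 1 ≤ i ∧ i ≤ n
  · rw [pdN_eq h.1 h.2]
    funext x
    have h0 : fderiv ℝ (0 : (Fin n → ℝ) → ℝ) x = 0 := fderiv_const_apply 0
    simp [h0]
  · rw [pdN_out h]

private lemma H_out_left {i : ℕ} (h : ¬ (1 ≤ i ∧ i ≤ n)) (f : (Fin n → ℝ) → ℝ)
    (x : Fin n → ℝ) : pdN i f x = 0 := by
  rw [pdN_out h]; rfl

private lemma H_out_right (i : ℕ) {j : ℕ} (h : ¬ (1 ≤ j ∧ j ≤ n)) (f : (Fin n → ℝ) → ℝ)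
    (x : Fin n → ℝ) : pdN i (pdN j f) x = 0 := by
  rw [pdN_out h, pdN_zero_fun]; rfl

private lemma infty_le : (2 : WithTop ℕ∞) ≤ ((⊤ : ℕ∞) : WithTop ℕ∞) := by
  have : ((2 : ℕ∞) : WithTop ℕ∞) ≤ ((⊤ : ℕ∞) : WithTop ℕ∞) := by exact_mod_cast le_top
  simpa using this

private lemma infty_add_one_le :
    ((⊤ : ℕ∞) : WithTop ℕ∞) + 1 ≤ ((⊤ : ℕ∞) : WithTop ℕ∞) := by simp

private lemma one_le_infty : (1 : WithTop ℕ∞) ≤ ((⊤ : ℕ∞) : WithTop ℕ∞) := by simp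

private lemma contDiffOn_pdN {U : Set (Fin n → ℝ)} (hU : IsOpen U) {f : (Fin n → ℝ) → ℝ}
    (hf : ContDiffOn ℝ (⊤ : ℕ∞) f U) (i : ℕ) :
    ContDiffOn ℝ (⊤ : ℕ∞) (pdN i f) U := by
  by_cases h : 1 ≤ i ∧ i ≤ n
  · rw [pdN_eq h.1 h.2]
    exact (hf.fderiv_of_isOpen hU infty_add_one_le).clm_apply contDiffOn_const
  · rw [pdN_out h]
    exact contDiffOn_const

private lemma pdN_symm {U : Set (Fin n → ℝ)} (hU : IsOpen U) {a₀ : (Fin n → ℝ) → ℝ}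
    (ha : ContDiffOn ℝ (⊤ : ℕ∞) a₀ U) {i j : ℕ} (hi1 : 1 ≤ i) (hin : i ≤ n)
    (hj1 : 1 ≤ j) (hjn : j ≤ n) {x : Fin n → ℝ} (hx : x ∈ U) :
    pdN i (pdN j a₀) x = pdN j (pdN i a₀) x := by
  have hax : ContDiffAt ℝ (⊤ : ℕ∞) a₀ x := ha.contDiffAt (hU.mem_nhds hx)
  have hsym : IsSymmSndFDerivAt ℝ a₀ x := hax.isSymmSndFDerivAt (by simpa [minSmoothness_of_isRCLikeNormedField] using infty_le)
  have hd : DifferentiableAt ℝ (fderiv ℝ a₀) x := by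
    have h2 := (ha.fderiv_of_isOpen hU infty_add_one_le).contDiffAt (hU.mem_nhds hx)
    exact h2.differentiableAt (by simp)
  have key : ∀ v w : Fin n → ℝ, fderiv ℝ (fun y => fderiv ℝ a₀ y v) x w
      = fderiv ℝ (fderiv ℝ a₀) x w v := by
    intro v w
    rw [fderiv_clm_apply hd (differentiableAt_const v)]
    simp
  rw [pdN_apply hi1 hin, pdN_apply hj1 hjn, pdN_eq hj1 hjn, pdN_eq hi1 hin, key, key]
  exact hsym _ _

/-- The main pointwise lemma, at points where the second coordinate is nonzero:
all second derivatives on a given antidiagonal agree. -/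
private lemma key_lemma (hn2 : 2 ≤ n) {U : Set (Fin n → ℝ)} (hU : IsOpen U)
    {a₀ : (Fin n → ℝ) → ℝ} (ha : ContDiffOn ℝ (⊤ : ℕ∞) a₀ U)
    (hsol : SolvesJordan n U a₀) {x : Fin n → ℝ} (hx : x ∈ U)
    (hx2 : x ⟨1, by omega⟩ ≠ 0) :
    ∀ m i j : ℕ, 1 ≤ i → 1 ≤ j → i + j = m →
      pdN i (pdN j a₀) x = pdN 1 (pdN (m - 1) a₀) x := by
  have hc2 : coordN (n := n) 2 x = x ⟨1, by omega⟩ := by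
    simp only [coordN, dif_pos (⟨by omega, by omega⟩ : 1 ≤ 2 ∧ 2 ≤ n)]
  suffices h : ∀ k m, 2 * n + 1 ≤ m + k → ∀ i j : ℕ, 1 ≤ i → 1 ≤ j → i + j = m →
      pdN i (pdN j a₀) x = pdN 1 (pdN (m - 1) a₀) x by
    intro m; exact h (2 * n + 1) m (by omega)
  intro k
  induction k with
  | zero =>
    intro m hm i j hi hj hij
    have hG : pdN (n := n) 1 (pdN (m - 1) a₀) x = 0 :=
      H_out_right 1 (by omega) a₀ x
    rw [hG]
    rcases (by omega : n < i ∨ n < j) with h | h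
    · exact H_out_left (by omega) _ x
    · exact H_out_right i (by omega) a₀ x
  | succ k ihk =>
    intro m hm
    by_cases hmk : 2 * n + 1 ≤ m + k
    · exact ihk m hmk
    have IH : ∀ m', m + 1 ≤ m' → ∀ i j : ℕ, 1 ≤ i → 1 ≤ j → i + j = m' →
        pdN i (pdN j a₀) x = pdN 1 (pdN (m' - 1) a₀) x := by
      intro m' hm'; exact ihk m' (by omega)
    -- the shift relation coming from the Jordan block equation
    have shift : ∀ i j : ℕ, 1 ≤ i → i ≤ n → 1 ≤ j → j ≤ n → i + j + 1 = m →
        pdN (i + 1) (pdN j a₀) x = pdN (j + 1) (pdN i a₀) x := by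
      intro i j hi1 hin hj1 hjn hijm
      have sumrep : ∀ p q : ℕ, 1 ≤ p → p ≤ n → 1 ≤ q → q ≤ n → p + q = i + j →
          (∑ s ∈ Finset.Icc (p + 1) n, coordN (s - p + 1) x * pdN s (pdN q a₀) x)
            = ∑ t ∈ Finset.Icc 1 n,
                (if t = 1 then coordN 2 x * pdN (p + 1) (pdN q a₀) x
                 else coordN (t + 1) x * pdN 1 (pdN (t + (i + j) - 1) a₀) x) := by
        intro p q hp1 hpn hq1 hqn hpq
        have step1 : (∑ s ∈ Finset.Icc (p + 1) n, coordN (s - p + 1) x * pdN s (pdN q a₀) x)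
            = ∑ t ∈ Finset.Icc 1 (n - p), coordN (t + 1) x * pdN (t + p) (pdN q a₀) x := by
          refine Finset.sum_nbij' (fun s => s - p) (fun t => t + p) ?_ ?_ ?_ ?_ ?_
          · intro a haa; simp only [Finset.mem_Icc] at *; omega
          · intro a haa; simp only [Finset.mem_Icc] at *; omega
          · intro a haa; simp only [Finset.mem_Icc] at *; omega
          · intro a haa; simp only [Finset.mem_Icc] at *; omega
          · intro a haa
            simp only [Finset.mem_Icc] at haa
            have e1 : a - p + 1 = a - p + 1 := rfl
            have e2 : a - p + p = a := by omega
            rw [e2]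
        have step2 : (∑ t ∈ Finset.Icc 1 (n - p), coordN (t + 1) x * pdN (t + p) (pdN q a₀) x)
            = ∑ t ∈ Finset.Icc 1 (n - p),
                (if t = 1 then coordN 2 x * pdN (p + 1) (pdN q a₀) x
                 else coordN (t + 1) x * pdN 1 (pdN (t + (i + j) - 1) a₀) x) := by
          refine Finset.sum_congr rfl ?_
          intro t ht
          simp only [Finset.mem_Icc] at ht
          by_cases h1 : t = 1
          · rw [if_pos h1]
            subst h1
            have e1 : (1 : ℕ) + 1 = 2 := rfl
            have e2 : 1 + p = p + 1 := by omega
            rw [e1, e2]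
          · rw [if_neg h1]
            have ht2 : 2 ≤ t := by omega
            have hIH := IH (t + p + q) (by omega) (t + p) q (by omega) (by omega) rfl
            have e : t + p + q - 1 = t + (i + j) - 1 := by omega
            rw [hIH, e]
        have step3 : (∑ t ∈ Finset.Icc 1 (n - p),
                (if t = 1 then coordN 2 x * pdN (p + 1) (pdN q a₀) x
                 else coordN (t + 1) x * pdN 1 (pdN (t + (i + j) - 1) a₀) x))
            = ∑ t ∈ Finset.Icc 1 n,
                (if t = 1 then coordN 2 x * pdN (p + 1) (pdN q a₀) x
                 else coordN (t + 1) x * pdN 1 (pdN (t + (i + j) - 1) a₀) x) := by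
          refine Finset.sum_subset ?_ ?_
          · exact Finset.Icc_subset_Icc_right (by omega)
          · intro t ht hts
            simp only [Finset.mem_Icc] at ht hts
            have htbig : n - p < t := by omega
            by_cases h1 : t = 1
            · rw [if_pos h1]
              have hpn' : p = n := by omega
              have : pdN (n := n) (p + 1) (pdN q a₀) x = 0 :=
                H_out_left (by omega) _ x
              rw [this, mul_zero]
            · rw [if_neg h1]
              have : pdN (n := n) 1 (pdN (t + (i + j) - 1) a₀) x = 0 :=
                H_out_right 1 (by omega) a₀ x
              rw [this, mul_zero]
        rw [step1, step2, step3]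
      have h1 := sumrep i j hi1 hin hj1 hjn rfl
      have h2 := sumrep j i hj1 hjn hi1 hin (by omega)
      have heq := hsol i j hi1 hin hj1 hjn x hx
      rw [h1, h2, ← Finset.sum_sub_distrib] at heq
      have heq2 : (∑ t ∈ Finset.Icc 1 n,
          (if t = 1 then coordN 2 x * pdN (i + 1) (pdN j a₀) x
              - coordN 2 x * pdN (j + 1) (pdN i a₀) x else 0)) = 0 := by
        refine Eq.trans (Finset.sum_congr rfl ?_) heq
        intro t ht
        by_cases h : t = 1 <;> simp [h]
      rw [Finset.sum_ite_eq' (Finset.Icc 1 n) 1] at heq2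
      rw [if_pos (by simp only [Finset.mem_Icc]; omega)] at heq2
      rw [← mul_sub] at heq2
      rcases mul_eq_zero.1 heq2 with h | h
      · rw [hc2] at h; exact absurd h hx2
      · linarith [sub_eq_zero.1 h]
    -- the elementary move along an antidiagonal
    have move : ∀ a b : ℕ, 1 ≤ a → 1 ≤ b → a + (b + 1) = m →
        pdN a (pdN (b + 1) a₀) x = pdN (a + 1) (pdN b a₀) x := by
      intro a b ha1 hb1 hab
      by_cases han : a ≤ n
      · by_cases hbn : b ≤ n
        · have hsymm : pdN a (pdN (b + 1) a₀) x = pdN (b + 1) (pdN a a₀) x := by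
            by_cases hb1n : b + 1 ≤ n
            · exact pdN_symm hU ha ha1 han (by omega) hb1n hx
            · rw [H_out_right a (by omega) a₀ x, H_out_left (by omega) _ x]
          rw [hsymm]
          exact shift b a hb1 hbn ha1 han (by omega)
        · rw [H_out_right a (by omega) a₀ x, H_out_right (a + 1) (by omega) a₀ x]
      · rw [H_out_left (by omega) _ x, H_out_left (by omega) _ x]
    -- chain the moves
    have chain : ∀ a b : ℕ, 1 ≤ a → 1 ≤ b → a + b = m →
        pdN a (pdN b a₀) x = pdN 1 (pdN (m - 1) a₀) x := by
      intro a
      induction a with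
      | zero => intro b h1 h2 h3; omega
      | succ c ihc =>
        intro b h1 hb hab
        rcases Nat.eq_zero_or_pos c with hc | hc
        · subst hc
          have hbm : b = m - 1 := by omega
          rw [hbm]
        · have h2 : pdN c (pdN (b + 1) a₀) x = pdN (c + 1) (pdN b a₀) x :=
            move c b (by omega) hb (by omega)
          rw [← h2]
          exact ihc (b + 1) (by omega) (by omega) (by omega)
    exact fun i j hi hj hij => chain i j hi hj hij

end Helpers

/-- A solution of the single Jordan block equation of size `n` satisfies
`∂_i ∂_j a₀ = ∂_{i'} ∂_{j'} a₀` whenever `i + j = i' + j'` and `i + j ≤ n + 1`. -/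
theorem stmt11 {n : ℕ} (hn : 1 ≤ n) (U : Set (Fin n → ℝ)) (hU : IsOpen U)
    (a₀ : (Fin n → ℝ) → ℝ) (ha : ContDiffOn ℝ (⊤ : ℕ∞) a₀ U)
    (hsol : SolvesJordan n U a₀) :
    ∀ i j i' j' : ℕ, 1 ≤ i → i ≤ n → 1 ≤ j → j ≤ n → 1 ≤ i' → i' ≤ n → 1 ≤ j' → j' ≤ n →
      i + j = i' + j' → i + j ≤ n + 1 →
      ∀ x ∈ U, pdN i (pdN j a₀) x = pdN i' (pdN j' a₀) x := by
  intro i j i' j' hi1 hin hj1 hjn hi'1 hi'n hj'1 hj'n hsum hle x hx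
  by_cases hn2 : 2 ≤ n
  · -- main case `n ≥ 2`
    have good : ∀ y ∈ U, y ⟨1, by omega⟩ ≠ 0 →
        pdN i (pdN j a₀) y = pdN i' (pdN j' a₀) y := by
      intro y hy hy2
      have k1 := key_lemma hn2 hU ha hsol hy hy2 (i + j) i j hi1 hj1 rfl
      have k2 := key_lemma hn2 hU ha hsol hy hy2 (i + j) i' j' hi'1 hj'1 hsum.symm
      rw [k1, k2]
    by_cases hx2 : x ⟨1, by omega⟩ = 0
    · -- continuity/density argument
      set v : Fin n → ℝ := Pi.single (⟨1, by omega⟩ : Fin n) 1 with hv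
      have hp : Continuous (fun ε : ℝ => x + ε • v) := by
        exact continuous_const.add (continuous_id.smul continuous_const)
      have htd : Filter.Tendsto (fun ε : ℝ => x + ε • v) (nhds 0) (nhds x) := by
        have := hp.tendsto 0
        simpa using this
      have hcoord : ∀ ε : ℝ, (x + ε • v) ⟨1, by omega⟩ = ε := by
        intro ε
        simp [hv, hx2]
      have hev : ∀ᶠ ε : ℝ in nhds 0, x + ε • v ∈ U := htd.eventually (hU.mem_nhds hx)
      have φcont : ContinuousAt
          (fun y => pdN i (pdN j a₀) y - pdN i' (pdN j' a₀) y) x := by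
        have c1 : ContinuousOn (pdN (n := n) i (pdN j a₀)) U :=
          (contDiffOn_pdN hU (contDiffOn_pdN hU ha j) i).continuousOn
        have c2 : ContinuousOn (pdN (n := n) i' (pdN j' a₀)) U :=
          (contDiffOn_pdN hU (contDiffOn_pdN hU ha j') i').continuousOn
        exact (c1.sub c2).continuousAt (hU.mem_nhds hx)
      have t1 : Filter.Tendsto
          (fun ε : ℝ => pdN i (pdN j a₀) (x + ε • v) - pdN i' (pdN j' a₀) (x + ε • v))
          (nhdsWithin 0 {(0 : ℝ)}ᶜ)
          (nhds (pdN i (pdN j a₀) x - pdN i' (pdN j' a₀) x)) :=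
        φcont.tendsto.comp (htd.mono_left nhdsWithin_le_nhds)
      have t2 : Filter.Tendsto
          (fun ε : ℝ => pdN i (pdN j a₀) (x + ε • v) - pdN i' (pdN j' a₀) (x + ε • v))
          (nhdsWithin 0 {(0 : ℝ)}ᶜ) (nhds 0) := by
        have hzero : ∀ᶠ ε : ℝ in nhdsWithin 0 {(0 : ℝ)}ᶜ,
            pdN i (pdN j a₀) (x + ε • v) - pdN i' (pdN j' a₀) (x + ε • v) = 0 := by
          filter_upwards [hev.filter_mono nhdsWithin_le_nhds, self_mem_nhdsWithin]
            with ε h1 h2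
          have h3 : (x + ε • v) ⟨1, by omega⟩ ≠ 0 := by
            rw [hcoord]; exact h2
          have := good _ h1 h3
          rw [this, sub_self]
        exact (Filter.tendsto_congr' hzero).2 tendsto_const_nhds
      have := tendsto_nhds_unique t1 t2
      linarith [this]
    · exact good x hx hx2
  · -- trivial case `n = 1`
    have h1 : i = 1 := by omega
    have h2 : j = 1 := by omega
    have h3 : i' = 1 := by omega
    have h4 : j' = 1 := by omega
    subst h1 h2 h3 h4
    rfl
end

section
/- Let n ≥ 1 and let a₀ : U → ℝ be a smooth function on an open set U ⊆ ℝⁿ such that: (i) ∂_i ∂_j a₀ = 0 on U whenever i + j ≥ n + 2, and (ii) ∂_i ∂_j a₀ = ∂_ī ∂_j̄ a₀ on U whenever i + j = ī + j̄ and i + j ≤ n + 1. Then a₀ solves the single Jordan block equation of size n on U. -/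
/-- Conversely, if `∂_i ∂_j a₀ = 0` for `i + j ≥ n + 2` and
`∂_i ∂_j a₀ = ∂_{i'} ∂_{j'} a₀` whenever `i + j = i' + j' ≤ n + 1`, then `a₀` solves
the single Jordan block equation of size `n`. -/
theorem stmt12 {n : ℕ} (hn : 1 ≤ n) (U : Set (Fin n → ℝ)) (hU : IsOpen U)
    (a₀ : (Fin n → ℝ) → ℝ) (ha : ContDiffOn ℝ (⊤ : ℕ∞) a₀ U)
    (h1 : ∀ i j : ℕ, 1 ≤ i → i ≤ n → 1 ≤ j → j ≤ n → n + 2 ≤ i + j →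
      ∀ x ∈ U, pdN i (pdN j a₀) x = 0)
    (h2 : ∀ i j i' j' : ℕ, 1 ≤ i → i ≤ n → 1 ≤ j → j ≤ n →
      1 ≤ i' → i' ≤ n → 1 ≤ j' → j' ≤ n → i + j = i' + j' → i + j ≤ n + 1 →
      ∀ x ∈ U, pdN i (pdN j a₀) x = pdN i' (pdN j' a₀) x) :
    SolvesJordan n U a₀ := by
  intro i j hi1 hin hj1 hjn x hx
  have key : ∀ p q : ℕ, 1 ≤ p → p ≤ n → 1 ≤ q → q ≤ n →
      (∑ s ∈ Finset.Icc (p + 1) n, coordN (s - p + 1) x * pdN s (pdN q a₀) x)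
        = ∑ t ∈ Finset.Icc 1 (n + 1 - p - q),
            coordN (t + 1) x * pdN (t + p + q - 1) (pdN 1 a₀) x := by
    intro p q hp1 hpn hq1 hqn
    have hcongr : ∀ s ∈ Finset.Icc (p + 1) n,
        coordN (s - p + 1) x * pdN s (pdN q a₀) x
          = if s + q ≤ n + 1 then coordN (s - p + 1) x * pdN (s + q - 1) (pdN 1 a₀) x
            else 0 := by
      intro s hs
      simp only [Finset.mem_Icc] at hs
      by_cases h : s + q ≤ n + 1
      · rw [if_pos h, h2 s q (s + q - 1) 1 (by omega) (by omega) hq1 hqn (by omega)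
          (by omega) (le_refl 1) hn (by omega) h x hx]
      · rw [if_neg h, h1 s q (by omega) (by omega) hq1 hqn (by omega) x hx, mul_zero]
    rw [Finset.sum_congr rfl hcongr, Finset.sum_ite, Finset.sum_const_zero, add_zero]
    have hfilter : (Finset.Icc (p + 1) n).filter (fun s => s + q ≤ n + 1)
        = Finset.Icc (p + 1) (n + 1 - q) := by
      ext s
      simp only [Finset.mem_filter, Finset.mem_Icc]
      omega
    rw [hfilter]
    refine Finset.sum_nbij' (fun s => s - p) (fun t => t + p) ?_ ?_ ?_ ?_ ?_ <;>
      intro a ha' <;> simp only [Finset.mem_Icc] at ha' ⊢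
    · omega
    · omega
    · omega
    · omega
    · rw [show a - p + 1 = a - p + 1 from rfl, show a - p + p + q - 1 = a + q - 1 by omega]
  rw [key i j hi1 hin hj1 hjn, key j i hj1 hjn hi1 hin,
    show n + 1 - j - i = n + 1 - i - j by omega]
  rw [sub_eq_zero]
  refine Finset.sum_congr rfl fun t _ => ?_
  rw [show t + i + j - 1 = t + j + i - 1 by omega]
end

section
/- Let n ≥ 1, let I ⊆ ℝ be an open interval, and let a₀ be a smooth solution of the single Jordan block equation of size n on U = I × ℝ^{n−1}. Then a₀ is a polynomial in u²,…,uⁿ with smooth coefficients depending on u¹: there exist finitely many multi-indices β = (β_2,…,β_n) ∈ ℕ^{n−1} and smooth functions g_β : I → ℝ such that a₀(u¹,…,uⁿ) = Σ_β g_β(u¹) (u²)^{β_2} ⋯ (uⁿ)^{β_n} on U. -/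
namespace Stmt15Aux

variable {n : ℕ} {U : Set (Fin n → ℝ)}

lemma pdN_apply {i : ℕ} (h1 : 1 ≤ i) (h2 : i ≤ n) (f : (Fin n → ℝ) → ℝ) (x : Fin n → ℝ) :
    pdN i f x = fderiv ℝ f x (Pi.single (⟨i - 1, by omega⟩ : Fin n) 1) := by
  rw [pdN, dif_pos ⟨h1, h2⟩]

lemma pdN_out {i : ℕ} (h : ¬(1 ≤ i ∧ i ≤ n)) (f : (Fin n → ℝ) → ℝ) : pdN i f = 0 :=
  dif_neg h

lemma pdN_zero (i : ℕ) : pdN (n := n) i 0 = 0 := by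
  by_cases h : 1 ≤ i ∧ i ≤ n
  · funext x
    rw [pdN_apply h.1 h.2]
    rw [show (0 : (Fin n → ℝ) → ℝ) = fun _ => (0:ℝ) from rfl, fderiv_fun_const]
    simp
  · exact pdN_out h 0

lemma pdN_congrOn (hU : IsOpen U) {f g : (Fin n → ℝ) → ℝ} (hfg : Set.EqOn f g U) (i : ℕ) :
    Set.EqOn (pdN i f) (pdN i g) U := by
  intro x hx
  by_cases h : 1 ≤ i ∧ i ≤ n
  · rw [pdN_apply h.1 h.2, pdN_apply h.1 h.2]
    have : f =ᶠ[nhds x] g := Filter.eventuallyEq_of_mem (hU.mem_nhds hx) hfg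
    rw [this.fderiv_eq]
  · rw [pdN_out h, pdN_out h]

lemma pdN_contDiffOn (hU : IsOpen U) {f : (Fin n → ℝ) → ℝ}
    (hf : ContDiffOn ℝ (⊤ : ℕ∞) f U) (i : ℕ) : ContDiffOn ℝ (⊤ : ℕ∞) (pdN i f) U := by
  by_cases h : 1 ≤ i ∧ i ≤ n
  · have hd : ContDiffOn ℝ (⊤ : ℕ∞) (fderiv ℝ f) U := by
      apply hf.fderiv_of_isOpen hU
      exact_mod_cast le_top
    have he : pdN i f = fun x => fderiv ℝ f x (Pi.single (⟨i - 1, by omega⟩ : Fin n) 1) := by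
      funext x; exact pdN_apply h.1 h.2 f x
    rw [he]; exact hd.clm_apply contDiffOn_const
  · rw [pdN_out h]; exact contDiffOn_const

lemma pdN_symm (hU : IsOpen U) {f : (Fin n → ℝ) → ℝ}
    (hf : ContDiffOn ℝ (⊤ : ℕ∞) f U) (i j : ℕ) :
    Set.EqOn (pdN i (pdN j f)) (pdN j (pdN i f)) U := by
  intro x hx
  by_cases hi : 1 ≤ i ∧ i ≤ n
  · by_cases hj : 1 ≤ j ∧ j ≤ n
    · -- core case
      set vi : Fin n → ℝ := Pi.single (⟨i - 1, by omega⟩ : Fin n) 1 with hvi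
      set vj : Fin n → ℝ := Pi.single (⟨j - 1, by omega⟩ : Fin n) 1 with hvj
      have hdf : ContDiffOn ℝ (⊤ : ℕ∞) (fderiv ℝ f) U := by
        apply hf.fderiv_of_isOpen hU
        exact_mod_cast le_top
      have hdfx : DifferentiableAt ℝ (fderiv ℝ f) x :=
        ((hdf x hx).contDiffAt (hU.mem_nhds hx)).differentiableAt (by simp)
      have hev : ∀ᶠ y in nhds x, HasFDerivAt f (fderiv ℝ f y) y := by
        filter_upwards [hU.mem_nhds hx] with y hy
        exact (((hf y hy).contDiffAt (hU.mem_nhds hy)).differentiableAt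
          (by simp)).hasFDerivAt
      have hsymm := second_derivative_symmetric_of_eventually hev hdfx.hasFDerivAt vi vj
      have e1 : ∀ (v u : Fin n → ℝ), fderiv ℝ (fun y => fderiv ℝ f y u) x v
          = (fderiv ℝ (fderiv ℝ f) x v) u := by
        intro v u
        have := fderiv_clm_apply (c := fderiv ℝ f) (u := fun _ => u) hdfx
          (differentiableAt_const u)
        rw [this]; simp
      rw [pdN_apply hi.1 hi.2, pdN_apply hj.1 hj.2]
      have g1 : Set.EqOn (pdN j f) (fun y => fderiv ℝ f y vj) U := by
        intro y hy; exact pdN_apply hj.1 hj.2 f y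
      have g2 : Set.EqOn (pdN i f) (fun y => fderiv ℝ f y vi) U := by
        intro y hy; exact pdN_apply hi.1 hi.2 f y
      have r1 : fderiv ℝ (pdN j f) x = fderiv ℝ (fun y => fderiv ℝ f y vj) x :=
        (Filter.eventuallyEq_of_mem (hU.mem_nhds hx) g1).fderiv_eq
      have r2 : fderiv ℝ (pdN i f) x = fderiv ℝ (fun y => fderiv ℝ f y vi) x :=
        (Filter.eventuallyEq_of_mem (hU.mem_nhds hx) g2).fderiv_eq
      rw [r1, r2, e1, e1]
      exact hsymm
    · rw [pdN_out (f := f) hj, pdN_zero, pdN_out (f := pdN i f) hj]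
  · rw [pdN_out (f := f) hi, pdN_zero, pdN_out (f := pdN j f) hi]


lemma coordN_apply {i : ℕ} (h1 : 1 ≤ i) (h2 : i ≤ n) (x : Fin n → ℝ) :
    coordN i x = x ⟨i - 1, by omega⟩ := by
  rw [coordN, dif_pos ⟨h1, h2⟩]

/-- Density: if `x i * T x = 0` on `U` and `U` is invariant under changing coordinate `i`,
then `T = 0` on `U`. -/
lemma eq_zero_of_coord_mul (hU : IsOpen U) {i : Fin n}
    (hcyl : ∀ x ∈ U, ∀ t : ℝ, Function.update x i t ∈ U)
    {T : (Fin n → ℝ) → ℝ} (hT : ContinuousOn T U)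
    (h : ∀ x ∈ U, x i * T x = 0) : ∀ x ∈ U, T x = 0 := by
  intro x hx
  set p : ℝ → (Fin n → ℝ) := fun t => Function.update x i t with hp
  have hpc : Continuous p := by
    apply continuous_pi
    intro j
    by_cases hj : j = i
    · subst hj; simp only [hp, Function.update_self]; exact continuous_id
    · simp only [hp, Function.update_of_ne hj]; exact continuous_const
  have hmem : ∀ t, p t ∈ U := fun t => hcyl x hx t
  have hg : Continuous (T ∘ p) := hT.comp_continuous hpc hmem
  have hzero : Set.EqOn (T ∘ p) (fun _ => (0 : ℝ)) ({(0 : ℝ)}ᶜ) := by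
    intro t ht
    have := h (p t) (hmem t)
    have hti : p t i = t := Function.update_self i t x
    rw [hti] at this
    have ht0 : t ≠ 0 := ht
    simpa [Function.comp] using (mul_eq_zero.mp this).resolve_left ht0
  have := Continuous.ext_on (dense_compl_singleton (0 : ℝ)) hg continuous_const hzero
  have hx0 : p (x i) = x := Function.update_eq_self i x
  calc T x = (T ∘ p) (x i) := by rw [Function.comp, hx0]
  _ = 0 := by rw [this]

section Star

variable {I : Set ℝ} {a : (Fin n → ℝ) → ℝ}

lemma sumK (ha : ContDiffOn ℝ (⊤ : ℕ∞) a U) {p : ℕ} (hp : 1 ≤ p) (q : ℕ) (x : Fin n → ℝ) :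
    ∑ s ∈ Finset.Icc (p + 1) n, coordN (s - p + 1) x * pdN s (pdN q a) x
      = ∑ k ∈ Finset.Icc 2 n, coordN k x * pdN (k + p - 1) (pdN q a) x := by
  have h1 : Finset.Icc 2 (n + 1 - p) ⊆ Finset.Icc 2 n :=
    Finset.Icc_subset_Icc_right (by omega)
  have hzero : ∀ k ∈ Finset.Icc 2 n, k ∉ Finset.Icc 2 (n + 1 - p) →
      coordN k x * pdN (k + p - 1) (pdN q a) x = 0 := by
    intro k hk hk'
    simp only [Finset.mem_Icc] at hk hk'
    rw [pdN_out (i := k + p - 1) (by omega)]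
    simp
  rw [← Finset.sum_subset h1 hzero]
  apply Finset.sum_nbij' (fun s => s - p + 1) (fun k => k + p - 1)
  · intro s hs; simp only [Finset.mem_Icc] at hs ⊢; omega
  · intro k hk; simp only [Finset.mem_Icc] at hk ⊢; omega
  · intro s hs; simp only [Finset.mem_Icc] at hs; omega
  · intro k hk; simp only [Finset.mem_Icc] at hk; omega
  · intro s hs
    simp only [Finset.mem_Icc] at hs
    rw [show s - p + 1 + p - 1 = s from by omega]

variable (hU : IsOpen U) (hUdef : U = {x | coordN 1 x ∈ I})
  (ha : ContDiffOn ℝ (⊤ : ℕ∞) a U) (hsol : SolvesJordan n U a)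

include hU hUdef ha hsol in
lemma star_aux : ∀ (d p q : ℕ), 1 ≤ p → 1 ≤ q → 2 * n ≤ p + q + d →
    ∀ x ∈ U, pdN (p + 1) (pdN q a) x = pdN (q + 1) (pdN p a) x := by
  intro d
  induction d with
  | zero =>
    intro p q hp hq hd
    by_cases hpq : p = q
    · subst hpq; intro x hx; rfl
    by_cases hpn : p ≤ n
    · by_cases hqn : q ≤ n
      · omega
      · intro x hx
        rw [pdN_out (i := q) (by omega), pdN_zero, pdN_out (i := q + 1) (by omega)]
    · intro x hx
      rw [pdN_out (i := p) (by omega), pdN_zero, pdN_out (i := p + 1) (by omega)]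
  | succ d ih =>
    intro p q hp hq hd
    by_cases hpq : p = q
    · subst hpq; intro x hx; rfl
    by_cases hpn : p ≤ n
    swap
    · intro x hx
      rw [pdN_out (i := p) (by omega), pdN_zero, pdN_out (i := p + 1) (by omega)]
    by_cases hqn : q ≤ n
    swap
    · intro x hx
      rw [pdN_out (i := q) (by omega), pdN_zero, pdN_out (i := q + 1) (by omega)]
    -- main case : 1 ≤ p, q ≤ n, p ≠ q
    have h2n : 2 ≤ n := by omega
    have hn1 : 1 ≤ n := by omega
    have hIH : ∀ p' q', 1 ≤ p' → 1 ≤ q' → p + q + 1 ≤ p' + q' →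
        ∀ y ∈ U, pdN (p' + 1) (pdN q' a) y = pdN (q' + 1) (pdN p' a) y :=
      fun p' q' h1 h2 h3 => ih p' q' h1 h2 (by omega)
    have claimX : ∀ k, 1 ≤ k → ∀ p' q', 1 ≤ p' → 1 ≤ q' → p + q ≤ p' + q' →
        ∀ y ∈ U, pdN (p' + k + 1) (pdN q' a) y = pdN (q' + k + 1) (pdN p' a) y := by
      intro k hk
      induction k, hk using Nat.le_induction with
      | base =>
        intro p' q' h1 h2 h3 y hy
        have t1 := hIH (p' + 1) q' (by omega) h2 (by omega) y hy
        have t2 := hIH (q' + 1) p' (by omega) h1 (by omega) y hy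
        have s1 := pdN_symm hU ha (q' + 1) (p' + 1) hy
        exact t1.trans (s1.trans t2.symm)
      | succ k hk ihk =>
        intro p' q' h1 h2 h3 y hy
        have t1 := hIH (p' + k + 1) q' (by omega) h2 (by omega) y hy
        have s1 := pdN_symm hU ha (q' + 1) (p' + k + 1) hy
        have t2 := ihk p' (q' + 1) h1 (by omega) (by omega) y hy
        rw [show p' + (k + 1) + 1 = p' + k + 1 + 1 from by omega,
          show q' + (k + 1) + 1 = q' + 1 + k + 1 from by omega]
        exact t1.trans (s1.trans t2)
    -- the key pointwise relation with the u² factor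
    have key : ∀ y ∈ U, y ⟨1, h2n⟩ *
        (pdN (p + 1) (pdN q a) y - pdN (q + 1) (pdN p a) y) = 0 := by
      intro y hy
      have hrel := hsol p q hp hpn hq hqn y hy
      rw [sumK ha hp q y, sumK ha hq p y, ← Finset.sum_sub_distrib] at hrel
      have hsplit : Finset.Icc 2 n = insert 2 (Finset.Icc 3 n) := by
        ext m; simp only [Finset.mem_Icc, Finset.mem_insert]; omega
      rw [hsplit, Finset.sum_insert (by simp [Finset.mem_Icc])] at hrel
      have hz : ∀ k ∈ Finset.Icc 3 n,
          coordN k y * pdN (k + p - 1) (pdN q a) y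
            - coordN k y * pdN (k + q - 1) (pdN p a) y = 0 := by
        intro k hk
        simp only [Finset.mem_Icc] at hk
        have hcx := claimX (k - 2) (by omega) p q hp hq (le_refl _) y hy
        rw [show k + p - 1 = p + (k - 2) + 1 from by omega,
          show k + q - 1 = q + (k - 2) + 1 from by omega, hcx]
        ring
      rw [Finset.sum_eq_zero hz, add_zero] at hrel
      rw [show 2 + p - 1 = p + 1 from by omega, show 2 + q - 1 = q + 1 from by omega] at hrel
      rw [coordN_apply (by omega) h2n] at hrel
      rw [mul_sub]
      exact hrel
    -- cylinder property
    have hcyl : ∀ x ∈ U, ∀ t : ℝ, Function.update x (⟨1, h2n⟩ : Fin n) t ∈ U := by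
      intro x hx t
      rw [hUdef] at hx ⊢
      simp only [Set.mem_setOf_eq] at hx ⊢
      rw [coordN_apply (le_refl 1) hn1] at hx ⊢
      rw [Function.update_of_ne (by simp [Fin.ext_iff])]
      exact hx
    have hT : ContinuousOn
        (fun y => pdN (p + 1) (pdN q a) y - pdN (q + 1) (pdN p a) y) U := by
      apply ContinuousOn.sub
      · exact (pdN_contDiffOn hU (pdN_contDiffOn hU ha q) (p + 1)).continuousOn
      · exact (pdN_contDiffOn hU (pdN_contDiffOn hU ha p) (q + 1)).continuousOn
    have hfin := eq_zero_of_coord_mul hU hcyl hT key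
    intro x hx
    have := hfin x hx
    linarith [this]

include hU hUdef ha hsol in
lemma star : ∀ p q, 1 ≤ p → 1 ≤ q →
    ∀ x ∈ U, pdN (p + 1) (pdN q a) x = pdN (q + 1) (pdN p a) x :=
  fun p q hp hq => star_aux hU hUdef ha hsol (2 * n) p q hp hq (by omega)

end Star

noncomputable def iterD {n : ℕ} (L : List ℕ) (f : (Fin n → ℝ) → ℝ) : (Fin n → ℝ) → ℝ :=
  L.foldr pdN f

@[simp] lemma iterD_nil (f : (Fin n → ℝ) → ℝ) : iterD [] f = f := rfl

@[simp] lemma iterD_cons (i : ℕ) (L : List ℕ) (f : (Fin n → ℝ) → ℝ) :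
    iterD (i :: L) f = pdN i (iterD L f) := rfl

lemma iterD_append (L : List ℕ) (i : ℕ) (f : (Fin n → ℝ) → ℝ) :
    iterD (L ++ [i]) f = iterD L (pdN i f) := by
  simp [iterD, List.foldr_append]

lemma iterD_contDiffOn (hU : IsOpen U) {f : (Fin n → ℝ) → ℝ}
    (hf : ContDiffOn ℝ (⊤ : ℕ∞) f U) (L : List ℕ) :
    ContDiffOn ℝ (⊤ : ℕ∞) (iterD L f) U := by
  induction L with
  | nil => exact hf
  | cons i L ih => exact pdN_contDiffOn hU ih i

lemma iterD_congrOn (hU : IsOpen U) {f g : (Fin n → ℝ) → ℝ}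
    (hfg : Set.EqOn f g U) (L : List ℕ) : Set.EqOn (iterD L f) (iterD L g) U := by
  induction L with
  | nil => exact hfg
  | cons i L ih => exact pdN_congrOn hU ih i

lemma iterD_zero (L : List ℕ) : iterD (n := n) L 0 = 0 := by
  induction L with
  | nil => rfl
  | cons i L ih => rw [iterD_cons, ih, pdN_zero]

lemma iterD_comm1 (hU : IsOpen U) {f : (Fin n → ℝ) → ℝ}
    (hf : ContDiffOn ℝ (⊤ : ℕ∞) f U) (j : ℕ) (L : List ℕ) :
    Set.EqOn (iterD L (pdN j f)) (pdN j (iterD L f)) U := by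
  induction L with
  | nil => intro x _; rfl
  | cons i L ih =>
    intro x hx
    rw [iterD_cons, iterD_cons]
    have h1 := pdN_congrOn hU ih i hx
    rw [h1]
    exact pdN_symm hU (iterD_contDiffOn hU hf L) i j hx

section Merge

variable {a : (Fin n → ℝ) → ℝ}
variable (hU : IsOpen U) (ha : ContDiffOn ℝ (⊤ : ℕ∞) a U)
  (hstar : ∀ p q, 1 ≤ p → 1 ≤ q →
    ∀ x ∈ U, pdN (p + 1) (pdN q a) x = pdN (q + 1) (pdN p a) x)

include hU ha hstar in
lemma merge : ∀ s, 1 ≤ s → ∀ q, 1 ≤ q →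
    ∀ x ∈ U, pdN s (pdN q a) x = pdN (s + q - 1) (pdN 1 a) x := by
  intro s hs
  induction s, hs using Nat.le_induction with
  | base =>
    intro q hq x hx
    rw [show 1 + q - 1 = q from by omega]
    exact pdN_symm hU ha 1 q hx
  | succ s hs ih =>
    intro q hq x hx
    have t1 := hstar s q hs hq x hx
    have s1 := pdN_symm hU ha (q + 1) s hx
    have t2 := ih (q + 1) (by omega) x hx
    rw [show s + 1 + q - 1 = s + (q + 1) - 1 from by omega]
    exact t1.trans (s1.trans t2)

include hU ha hstar in
lemma vanish_aux : ∀ (L : List ℕ), (∀ s ∈ L, 2 ≤ s ∧ s ≤ n) → ∀ q, 1 ≤ q →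
    n + 1 + L.length ≤ q + L.sum → ∀ x ∈ U, iterD L (pdN q a) x = 0 := by
  intro L
  induction L using List.reverseRecOn with
  | nil =>
    intro _ q hq hsum x hx
    rw [iterD_nil, pdN_out (by simp at hsum; omega)]
    rfl
  | append_singleton L s ih =>
    intro hL q hq hsum x hx
    have hs := hL s (by simp)
    have hL' : ∀ t ∈ L, 2 ≤ t ∧ t ≤ n := fun t ht => hL t (by simp [ht])
    simp only [List.length_append, List.sum_append, List.length_singleton,
      List.sum_cons, List.sum_nil] at hsum
    rw [iterD_append]
    -- merge innermost pair
    have hmg : Set.EqOn (pdN s (pdN q a)) (pdN (s + q - 1) (pdN 1 a)) U :=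
      fun y hy => merge hU ha hstar s (by omega) q hq y hy
    have e1 := iterD_congrOn hU hmg L hx
    rw [e1]
    have e2 : iterD L (pdN (s + q - 1) (pdN 1 a)) x
        = iterD (L ++ [s + q - 1]) (pdN 1 a) x := by rw [iterD_append]
    rw [e2]
    have e3 := iterD_comm1 hU ha 1 (L ++ [s + q - 1]) hx
    rw [e3]
    -- inner function is zero on U by ih
    have hz : Set.EqOn (iterD (L ++ [s + q - 1]) a) 0 U := by
      intro y hy
      rw [iterD_append]
      exact ih hL' (s + q - 1) (by omega) (by omega) y hy
    have := pdN_congrOn hU hz 1 hx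
    rw [this, pdN_zero]
    rfl

lemma sum_ge_two_mul_length : ∀ (L : List ℕ), (∀ s ∈ L, 2 ≤ s) → 2 * L.length ≤ L.sum := by
  intro L
  induction L with
  | nil => simp
  | cons i L ih =>
    intro h
    have h1 := h i (by simp)
    have h2 := ih (fun t ht => h t (by simp [ht]))
    simp only [List.length_cons, List.sum_cons]
    omega

include hU ha hstar in
lemma vanish (hn : 1 ≤ n) : ∀ (L : List ℕ), (∀ s ∈ L, 2 ≤ s ∧ s ≤ n) → L.length = n →
    ∀ x ∈ U, iterD L a x = 0 := by
  intro L
  induction L using List.reverseRecOn with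
  | nil => intro _ hlen; simp at hlen; omega
  | append_singleton L s _ =>
    intro hL hlen x hx
    have hs := hL s (by simp)
    have hL' : ∀ t ∈ L, 2 ≤ t ∧ t ≤ n := fun t ht => hL t (by simp [ht])
    have hsum := sum_ge_two_mul_length L (fun t ht => (hL' t ht).1)
    simp only [List.length_append, List.length_singleton] at hlen
    rw [iterD_append]
    exact vanish_aux hU ha hstar L hL' s (by omega) (by omega) x hx

end Merge

/-- 1-D: a smooth function with vanishing `N`-th derivative is its Taylor polynomial. -/
lemma oneD : ∀ (N : ℕ) (φ : ℝ → ℝ), ContDiff ℝ (⊤ : ℕ∞) φ → (∀ t, deriv^[N] φ t = 0) →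
    ∀ t, φ t = ∑ m ∈ Finset.range N, deriv^[m] φ 0 * t ^ m * ((m.factorial : ℝ))⁻¹ := by
  intro N
  induction N with
  | zero => intro φ _ h0 t; simpa using h0 t
  | succ N ih =>
    intro φ hφ h0 t
    have hφ' : ContDiff ℝ (⊤ : ℕ∞) (deriv φ) := (contDiff_infty_iff_deriv.mp hφ).2
    have hd' : ∀ s, deriv^[N] (deriv φ) s = 0 := by
      intro s
      rw [← Function.iterate_succ_apply]
      exact h0 s
    have hder := ih (deriv φ) hφ' hd'
    set C : ℕ → ℝ := fun m => deriv^[m] φ 0 with hC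
    set P : ℝ → ℝ := fun t => ∑ m ∈ Finset.range (N + 1), C m * t ^ m * ((m.factorial : ℝ))⁻¹
      with hP
    have hterm : ∀ (m : ℕ) (s : ℝ), HasDerivAt (fun u => C m * u ^ m * ((m.factorial : ℝ))⁻¹)
        (C m * (m * s ^ (m - 1)) * ((m.factorial : ℝ))⁻¹) s := by
      intro m s
      exact ((hasDerivAt_pow m s).const_mul (C m)).mul_const _
    have hPdiff : Differentiable ℝ P := by
      intro s
      exact DifferentiableAt.fun_sum (fun m _ => (hterm m s).differentiableAt)
    have hPderiv : ∀ s : ℝ, deriv P s = ∑ m ∈ Finset.range N, C (m + 1) * s ^ m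
        * ((m.factorial : ℝ))⁻¹ := by
      intro s
      rw [hP]
      rw [deriv_fun_sum (fun m _ => (hterm m s).differentiableAt)]
      have : ∀ m ∈ Finset.range (N + 1), deriv (fun u => C m * u ^ m
          * ((m.factorial : ℝ))⁻¹) s = C m * (m * s ^ (m - 1)) * ((m.factorial : ℝ))⁻¹ :=
        fun m _ => (hterm m s).deriv
      rw [Finset.sum_congr rfl this]
      rw [Finset.sum_range_succ']
      simp only [Nat.cast_zero, zero_mul, mul_zero, zero_add, pow_zero, add_zero]
      apply Finset.sum_congr rfl
      intro m _
      have hfac : ((m + 1 : ℕ) : ℝ) * (((m + 1).factorial : ℝ))⁻¹ = ((m.factorial : ℝ))⁻¹ := by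
        rw [Nat.factorial_succ]
        have h1 : ((m + 1 : ℕ) : ℝ) ≠ 0 := by positivity
        have h2 : ((m.factorial : ℕ) : ℝ) ≠ 0 := by
          exact_mod_cast Nat.factorial_ne_zero m
        push_cast
        field_simp
      have hmm : (m + 1 : ℕ) - 1 = m := by omega
      rw [hmm, ← hfac]
      ring
    have hsub : ∀ s : ℝ, deriv (fun u => φ u - P u) s = 0 := by
      intro s
      rw [deriv_fun_sub ((hφ.differentiable (by simp)) s) (hPdiff s), hPderiv s, hder s]
      have : ∀ m ∈ Finset.range N, deriv^[m] (deriv φ) 0 * s ^ m * ((m.factorial : ℝ))⁻¹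
          = C (m + 1) * s ^ m * ((m.factorial : ℝ))⁻¹ := by
        intro m _
        rw [hC, ← Function.iterate_succ_apply]
      rw [Finset.sum_congr rfl this, sub_self]
    have hconst := is_const_of_deriv_eq_zero
      (f := fun u => φ u - P u) ((hφ.differentiable (by simp)).sub hPdiff) hsub t 0
    have hP0 : P 0 = C 0 := by
      have h1 : ∑ m ∈ Finset.range (N + 1), C m * (0 : ℝ) ^ m * ((m.factorial : ℝ))⁻¹ = C 0 := by
        rw [Finset.sum_eq_single_of_mem 0 (Finset.mem_range.mpr (Nat.succ_pos N))]
        · simp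
        · intro b _ hb
          simp [zero_pow hb]
      simpa [hP] using h1
    have : φ t - P t = φ 0 - C 0 := by rw [hconst, hP0]
    have hC0 : C 0 = φ 0 := rfl
    rw [hC0] at this
    have : φ t = P t := by linarith
    exact this

/-- Iterated derivative along a line, expressed via iterated partials. -/
lemma line_deriv (hU : IsOpen U) {f : (Fin n → ℝ) → ℝ} (hf : ContDiffOn ℝ (⊤ : ℕ∞) f U)
    (c v : Fin n → ℝ) (hline : ∀ t : ℝ, c + t • v ∈ U) :
    ∀ (m : ℕ) (t : ℝ), deriv^[m] (fun s => f (c + s • v)) t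
      = ∑ w : Fin m → Fin n, (∏ j, v (w j)) *
          iterD (List.ofFn (fun j => ((w j : ℕ) + 1))) f (c + t • v) := by
  intro m
  induction m generalizing f with
  | zero =>
    intro t
    rw [Function.iterate_zero_apply]
    rw [Fintype.sum_unique]
    simp [iterD]
  | succ m ih =>
    intro t
    rw [Function.iterate_succ_apply']
    have hIH : deriv^[m] (fun s => f (c + s • v))
        = fun t => ∑ w : Fin m → Fin n, (∏ j, v (w j)) *
          iterD (List.ofFn (fun j => ((w j : ℕ) + 1))) f (c + t • v) := funext (ih hf)
    rw [hIH]
    have hgsm : ∀ w : Fin m → Fin n, ContDiffOn ℝ (⊤ : ℕ∞)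
        (iterD (List.ofFn (fun j => ((w j : ℕ) + 1))) f) U :=
      fun w => iterD_contDiffOn hU hf _
    have hlineDiff : ∀ (s : ℝ), HasDerivAt (fun u : ℝ => c + u • v) v s := by
      intro s
      have h1 : HasDerivAt (fun u : ℝ => u • v) ((1 : ℝ) • v) s :=
        (hasDerivAt_id s).smul_const v
      rw [one_smul] at h1
      exact h1.const_add c
    have hcomp : ∀ (w : Fin m → Fin n) (s : ℝ),
        HasDerivAt (fun u => iterD (List.ofFn (fun j => ((w j : ℕ) + 1))) f (c + u • v))
          (fderiv ℝ (iterD (List.ofFn (fun j => ((w j : ℕ) + 1))) f) (c + s • v) v) s := by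
      intro w s
      have hd : DifferentiableAt ℝ (iterD (List.ofFn (fun j => ((w j : ℕ) + 1))) f)
          (c + s • v) :=
        (((hgsm w) _ (hline s)).contDiffAt (hU.mem_nhds (hline s))).differentiableAt
          (by simp)
      exact hd.hasFDerivAt.comp_hasDerivAt s (hlineDiff s)
    rw [deriv_fun_sum (fun w _ => ((hcomp w t).const_mul _).differentiableAt)]
    have hstep : ∀ w : Fin m → Fin n,
        deriv (fun s => (∏ j, v (w j)) *
          iterD (List.ofFn (fun j => ((w j : ℕ) + 1))) f (c + s • v)) t
        = (∏ j, v (w j)) * ∑ i : Fin n, v i *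
            iterD (((i : ℕ) + 1) :: List.ofFn (fun j => ((w j : ℕ) + 1))) f (c + t • v) := by
      intro w
      rw [deriv_const_mul _ (hcomp w t).differentiableAt, (hcomp w t).deriv]
      congr 1
      set g := iterD (List.ofFn (fun j => ((w j : ℕ) + 1))) f with hg
      set y := c + t • v with hy
      -- expand fderiv applied to v via the basis
      have hvsum : v = ∑ i : Fin n, v i • (Pi.single i 1 : Fin n → ℝ) := by
        funext k
        rw [Finset.sum_apply]
        simp [Pi.single_apply]
      conv_lhs => rw [hvsum]
      rw [map_sum]
      apply Finset.sum_congr rfl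
      intro i _
      rw [map_smul, smul_eq_mul]
      congr 1
      rw [iterD_cons ((i : ℕ) + 1), pdN_apply (by omega) (by omega)]
      simp [hg]
    rw [Finset.sum_congr rfl (fun w _ => hstep w)]
    -- reindex : (Fin (m+1) → Fin n) ≃ (Fin n) × (Fin m → Fin n)
    rw [Fintype.sum_equiv (Fin.consEquiv (fun _ : Fin (m + 1) => Fin n)).symm
      (fun w => (∏ j, v (w j)) * iterD (List.ofFn (fun j => ((w j : ℕ) + 1))) f (c + t • v))
      (fun p => (∏ j, v (p.2 j)) * (v p.1 *
        iterD (((p.1 : ℕ) + 1) :: List.ofFn (fun j => ((p.2 j : ℕ) + 1))) f (c + t • v)))]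
    · rw [Fintype.sum_prod_type]
      have hms : ∀ w : Fin m → Fin n, (∏ j, v (w j)) * (∑ i : Fin n, v i *
          iterD (((i : ℕ) + 1) :: List.ofFn (fun j => ((w j : ℕ) + 1))) f (c + t • v))
          = ∑ i : Fin n, (∏ j, v (w j)) * (v i *
            iterD (((i : ℕ) + 1) :: List.ofFn (fun j => ((w j : ℕ) + 1))) f (c + t • v)) := by
        intro w
        rw [Finset.mul_sum]
      rw [Finset.sum_congr rfl (fun w _ => hms w), Finset.sum_comm]
    · intro w
      have hcons : (Fin.consEquiv (fun _ : Fin (m + 1) => Fin n)).symm w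
          = (w 0, fun j => w j.succ) := rfl
      rw [hcons]
      have h1 : (∏ j, v (w j)) = v (w 0) * ∏ j : Fin m, v (w j.succ) :=
        Fin.prod_univ_succ _
      have h2 : List.ofFn (fun j : Fin (m + 1) => ((w j : ℕ) + 1))
          = ((w 0 : ℕ) + 1) :: List.ofFn (fun j : Fin m => ((w j.succ : ℕ) + 1)) := by
        rw [List.ofFn_succ]
      rw [h1, h2]
      try ring

/-- profile of a word: how many times each letter occurs -/
def prof {n m : ℕ} (w : Fin m → Fin n) : Fin n → ℕ :=
  fun i => (Finset.univ.filter (fun j => w j = i)).card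

/-- words avoiding the letter `0` -/
def goodS (n m : ℕ) : Finset (Fin m → Fin n) :=
  Finset.univ.filter (fun w => ∀ j, (w j : ℕ) ≠ 0)

theorem represent (hn : 1 ≤ n) {I : Set ℝ} (hIo : IsOpen I)
    (hUdef : U = {x | coordN 1 x ∈ I}) {a : (Fin n → ℝ) → ℝ}
    (ha : ContDiffOn ℝ (⊤ : ℕ∞) a U)
    (hvan : ∀ (L : List ℕ), (∀ s ∈ L, 2 ≤ s ∧ s ≤ n) → L.length = n →
      ∀ x ∈ U, iterD L a x = 0) :
    ∃ (S : Finset (Fin n → ℕ)) (g : (Fin n → ℕ) → ℝ → ℝ),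
      (∀ β ∈ S, ContDiffOn ℝ (⊤ : ℕ∞) (g β) I) ∧
      ∀ x ∈ U, a x = ∑ β ∈ S, g β (coordN 1 x) *
        ∏ i ∈ Finset.univ.filter (fun i : Fin n => 1 ≤ i.val), x i ^ β i := by
  classical
  have hU : IsOpen U := by
    rw [hUdef]
    have he : {x : Fin n → ℝ | coordN 1 x ∈ I}
        = (fun x : Fin n → ℝ => x ⟨0, hn⟩) ⁻¹' I := by
      ext x
      simp only [Set.mem_setOf_eq, Set.mem_preimage]
      rw [coordN_apply le_rfl hn]
    rw [he]
    exact IsOpen.preimage (continuous_apply (⟨0, hn⟩ : Fin n)) hIo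
  set z0 : Fin n := ⟨0, hn⟩ with hz0
  -- the line map
  have hlineMem : ∀ t : ℝ, t ∈ I → Pi.single z0 t ∈ U := by
    intro t ht
    rw [hUdef]
    simp only [Set.mem_setOf_eq]
    rw [coordN_apply le_rfl hn]
    rw [show (⟨1 - 1, by omega⟩ : Fin n) = z0 from rfl, Pi.single_eq_same]
    exact ht
  refine ⟨(Finset.range n).biUnion (fun m => (goodS n m).image prof),
    fun β t => ∑ m ∈ Finset.range n, ((m.factorial : ℝ))⁻¹ *
      ∑ w ∈ (goodS n m).filter (fun w => prof w = β),
        iterD (List.ofFn fun j => ((w j : ℕ) + 1)) a (Pi.single z0 t), ?_, ?_⟩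
  · -- smoothness of the coefficients
    intro β _
    apply ContDiffOn.sum
    intro m _
    apply ContDiffOn.mul contDiffOn_const
    apply ContDiffOn.sum
    intro w _
    have hline : ContDiff ℝ (⊤ : ℕ∞) (fun t : ℝ => (Pi.single z0 t : Fin n → ℝ)) := by
      have : (fun t : ℝ => (Pi.single z0 t : Fin n → ℝ))
          = fun t : ℝ => t • (Pi.single z0 1 : Fin n → ℝ) := by
        funext t j
        rw [Pi.smul_apply, Pi.single_apply, Pi.single_apply]
        by_cases h : j = z0 <;> simp [h]
      rw [this]
      exact contDiff_id.smul contDiff_const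
    exact ContDiffOn.comp (iterD_contDiffOn hU ha _) hline.contDiffOn
      (fun t ht => hlineMem t ht)
  · -- the representation
    intro x hx
    set c : Fin n → ℝ := Pi.single z0 (x z0) with hc
    set v : Fin n → ℝ := x - c with hv
    have hxz0 : x z0 ∈ I := by
      rw [hUdef] at hx
      simp only [Set.mem_setOf_eq] at hx
      rwa [coordN_apply le_rfl hn] at hx
    have hvz0 : v z0 = 0 := by
      rw [hv, Pi.sub_apply, hc, Pi.single_eq_same, sub_self]
    have hvother : ∀ i : Fin n, i ≠ z0 → v i = x i := by
      intro i hi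
      rw [hv, Pi.sub_apply, hc, Pi.single_eq_of_ne hi, sub_zero]
    have hline : ∀ t : ℝ, c + t • v ∈ U := by
      intro t
      rw [hUdef]
      simp only [Set.mem_setOf_eq]
      rw [coordN_apply le_rfl hn]
      have : (c + t • v) z0 = x z0 := by
        rw [Pi.add_apply, Pi.smul_apply, hvz0, smul_zero, add_zero, hc, Pi.single_eq_same]
      rw [show (⟨1 - 1, by omega⟩ : Fin n) = z0 from rfl, this]
      exact hxz0
    have hφ : ContDiff ℝ (⊤ : ℕ∞) (fun s : ℝ => a (c + s • v)) := by
      rw [← contDiffOn_univ]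
      exact ContDiffOn.comp ha
        ((contDiff_const.add (contDiff_id.smul contDiff_const)).contDiffOn)
        (fun s _ => hline s)
    have hφN : ∀ t, deriv^[n] (fun s : ℝ => a (c + s • v)) t = 0 := by
      intro t
      rw [line_deriv hU ha c v hline n t]
      apply Finset.sum_eq_zero
      intro w _
      by_cases hw : ∀ j, (w j : ℕ) ≠ 0
      · have hzz := hvan (List.ofFn fun j => ((w j : ℕ) + 1)) ?_ ?_ (c + t • v) (hline t)
        · rw [hzz, mul_zero]
        · intro s hs
          rw [List.mem_ofFn] at hs
          obtain ⟨j, rfl⟩ := hs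
          have h1 := hw j
          have h2 := (w j).isLt
          constructor
          · omega
          · omega
        · simp
      · push_neg at hw
        obtain ⟨j, hj⟩ := hw
        have hwj : w j = z0 := Fin.ext (by simpa using hj)
        have : v (w j) = 0 := by rw [hwj]; exact hvz0
        rw [Finset.prod_eq_zero (Finset.mem_univ j) this, zero_mul]
    have hc0 : c + (0 : ℝ) • v = c := by rw [zero_smul, add_zero]
    have hx1 : x = c + (1 : ℝ) • v := by rw [one_smul, hv, add_sub_cancel]
    -- step 1 : express the m-th derivative at 0 via fibers
    have hstep1 : ∀ m : ℕ, m ∈ Finset.range n →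
        deriv^[m] (fun s : ℝ => a (c + s • v)) 0
        = ∑ β ∈ (Finset.range n).biUnion (fun m => (goodS n m).image prof),
            (∏ i ∈ Finset.univ.filter (fun i : Fin n => 1 ≤ i.val), x i ^ β i) *
            ∑ w ∈ (goodS n m).filter (fun w => prof w = β),
              iterD (List.ofFn fun j => ((w j : ℕ) + 1)) a c := by
      intro m hm
      rw [line_deriv hU ha c v hline m 0, hc0]
      -- drop words containing letter 0
      have hsub : goodS n m ⊆ (Finset.univ : Finset (Fin m → Fin n)) :=
        Finset.filter_subset _ _
      have hdrop : ∀ w ∈ (Finset.univ : Finset (Fin m → Fin n)), w ∉ goodS n m →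
          (∏ j, v (w j)) * iterD (List.ofFn fun j => ((w j : ℕ) + 1)) a c = 0 := by
        intro w _ hwbad
        rw [goodS, Finset.mem_filter] at hwbad
        push_neg at hwbad
        obtain ⟨j, hj⟩ := hwbad (Finset.mem_univ w)
        have hwj : w j = z0 := Fin.ext (by simpa using hj)
        have hvz : v (w j) = 0 := by rw [hwj]; exact hvz0
        rw [Finset.prod_eq_zero (Finset.mem_univ j) hvz, zero_mul]
      rw [← Finset.sum_subset hsub hdrop]
      -- fiber by profile
      rw [← Finset.sum_fiberwise_of_maps_to (g := prof)
        (t := (Finset.range n).biUnion (fun m => (goodS n m).image prof))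
        (fun w hw => Finset.mem_biUnion.mpr ⟨m, hm, Finset.mem_image_of_mem prof hw⟩)
        (fun w => (∏ j, v (w j)) * iterD (List.ofFn fun j => ((w j : ℕ) + 1)) a c)]
      apply Finset.sum_congr rfl
      intro β _
      rw [Finset.mul_sum]
      apply Finset.sum_congr rfl
      intro w hwmem
      rw [Finset.mem_filter] at hwmem
      obtain ⟨hwgood, hwprof⟩ := hwmem
      have hwgood' : ∀ j, (w j : ℕ) ≠ 0 := (Finset.mem_filter.mp hwgood).2
      congr 1
      -- ∏_j v (w j) = monomial
      have e1 : (∏ j, v (w j)) = ∏ i : Fin n, v i ^ prof w i := by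
        rw [← Finset.prod_fiberwise_of_maps_to (g := w) (t := Finset.univ)
          (fun j _ => Finset.mem_univ (w j)) (fun j => v (w j))]
        apply Finset.prod_congr rfl
        intro i _
        have : ∀ j ∈ Finset.univ.filter (fun j => w j = i), v (w j) = v i := by
          intro j hj
          rw [(Finset.mem_filter.mp hj).2]
        rw [Finset.prod_congr rfl this, Finset.prod_const]
        rfl
      have hβz0 : prof w z0 = 0 := by
        rw [prof, Finset.card_eq_zero, Finset.filter_eq_empty_iff]
        intro j _
        intro hcon
        exact hwgood' j (by rw [hcon])
      have e2 : ∏ i : Fin n, v i ^ prof w i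
          = ∏ i ∈ Finset.univ.filter (fun i : Fin n => 1 ≤ i.val), x i ^ prof w i := by
        rw [← Finset.mul_prod_erase Finset.univ _ (Finset.mem_univ z0), hβz0, pow_zero,
          one_mul]
        have herase : Finset.univ.erase z0
            = Finset.univ.filter (fun i : Fin n => 1 ≤ i.val) := by
          ext i
          simp only [Finset.mem_erase, Finset.mem_univ, and_true, Finset.mem_filter,
            true_and]
          constructor
          · intro h
            have : (i : ℕ) ≠ 0 := fun hc => h (Fin.ext (by simp [hc, hz0]))
            omega
          · intro h hc
            rw [hc, hz0] at h
            simp at h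
        rw [herase]
        apply Finset.prod_congr rfl
        intro i hi
        rw [Finset.mem_filter] at hi
        have : i ≠ z0 := by
          intro hc
          rw [hc, hz0] at hi
          simp at hi
        rw [hvother i this]
      rw [e1, e2, hwprof]
    -- final chain
    have hmain := oneD n _ hφ hφN 1
    have hme : a x = a (c + (1 : ℝ) • v) := by rw [← hx1]
    rw [hme, hmain]
    rw [coordN_apply le_rfl hn]
    rw [show (⟨1 - 1, by omega⟩ : Fin n) = z0 from rfl]
    have hsingle : (Pi.single z0 (x z0) : Fin n → ℝ) = c := rfl
    calc ∑ m ∈ Finset.range n,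
          deriv^[m] (fun s : ℝ => a (c + s • v)) 0 * 1 ^ m * ((m.factorial : ℝ))⁻¹
        = ∑ m ∈ Finset.range n, ((m.factorial : ℝ))⁻¹ *
            deriv^[m] (fun s : ℝ => a (c + s • v)) 0 := by
          apply Finset.sum_congr rfl
          intro m _
          rw [one_pow]
          ring
      _ = ∑ m ∈ Finset.range n, ∑ β ∈ (Finset.range n).biUnion
            (fun m => (goodS n m).image prof), ((m.factorial : ℝ))⁻¹ *
            ((∏ i ∈ Finset.univ.filter (fun i : Fin n => 1 ≤ i.val), x i ^ β i) *
            ∑ w ∈ (goodS n m).filter (fun w => prof w = β),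
              iterD (List.ofFn fun j => ((w j : ℕ) + 1)) a c) := by
          apply Finset.sum_congr rfl
          intro m hm
          rw [hstep1 m hm, Finset.mul_sum]
      _ = ∑ β ∈ (Finset.range n).biUnion (fun m => (goodS n m).image prof),
            ∑ m ∈ Finset.range n, ((m.factorial : ℝ))⁻¹ *
            ((∏ i ∈ Finset.univ.filter (fun i : Fin n => 1 ≤ i.val), x i ^ β i) *
            ∑ w ∈ (goodS n m).filter (fun w => prof w = β),
              iterD (List.ofFn fun j => ((w j : ℕ) + 1)) a c) := Finset.sum_comm
      _ = ∑ β ∈ (Finset.range n).biUnion (fun m => (goodS n m).image prof),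
            (∑ m ∈ Finset.range n, ((m.factorial : ℝ))⁻¹ *
            ∑ w ∈ (goodS n m).filter (fun w => prof w = β),
              iterD (List.ofFn fun j => ((w j : ℕ) + 1)) a (Pi.single z0 (x z0))) *
            ∏ i ∈ Finset.univ.filter (fun i : Fin n => 1 ≤ i.val), x i ^ β i := by
          apply Finset.sum_congr rfl
          intro β _
          rw [hsingle, Finset.sum_mul]
          apply Finset.sum_congr rfl
          intro m _
          ring


end Stmt15Aux

/-- A solution of the single Jordan block equation of size `n` on `I × ℝ^{n−1}`
(`I ⊆ ℝ` an open interval) is a polynomial in `u²,…,uⁿ` with smooth coefficients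
depending on `u¹`. -/
theorem stmt15 {n : ℕ} (hn : 1 ≤ n) (I : Set ℝ) (hIo : IsOpen I)
    (hIc : I.OrdConnected)
    (U : Set (Fin n → ℝ)) (hUdef : U = {x | coordN 1 x ∈ I})
    (a₀ : (Fin n → ℝ) → ℝ) (ha : ContDiffOn ℝ (⊤ : ℕ∞) a₀ U)
    (hsol : SolvesJordan n U a₀) :
    ∃ (S : Finset (Fin n → ℕ)) (g : (Fin n → ℕ) → ℝ → ℝ),
      (∀ β ∈ S, ContDiffOn ℝ (⊤ : ℕ∞) (g β) I) ∧
      ∀ x ∈ U, a₀ x = ∑ β ∈ S, g β (coordN 1 x) *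
        ∏ i ∈ Finset.univ.filter (fun i : Fin n => 1 ≤ i.val), x i ^ β i := by
  have hU : IsOpen U := by
    rw [hUdef]
    have he : {x : Fin n → ℝ | coordN 1 x ∈ I}
        = (fun x : Fin n → ℝ => x ⟨0, hn⟩) ⁻¹' I := by
      ext x
      simp only [Set.mem_setOf_eq, Set.mem_preimage]
      rw [Stmt15Aux.coordN_apply le_rfl hn]
    rw [he]
    exact IsOpen.preimage (continuous_apply (⟨0, hn⟩ : Fin n)) hIo
  have hstar := Stmt15Aux.star hU hUdef ha hsol
  have hvan := Stmt15Aux.vanish hU ha hstar hn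
  exact Stmt15Aux.represent hn hIo hUdef ha hvan
end
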